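/- arXiv:1806.00900 — 9 statements merged into one kernel-verified Lean document; each statement's English description precedes it below -/
import Mathlib

section
/- Suppose the loss depends on two consecutive layers only through their product (linear activation between them): L(A, B, θ) = G(B·A, θ) where A(t) ∈ ℝ^{a×b}, B(t) ∈ ℝ^{c×a}, θ(t) collects all other parameters, and G is differentiable. If A(t), B(t), θ(t) evolve under gradient flow, d/dt A = −∂L/∂A, d/dt B = −∂L/∂B, d/dt θ = −∂L/∂θ, then the a×a matrix A(t)A(t)ᵀ − B(t)ᵀB(t) is constant in t; equivalently, d/dt (A(t)A(t)ᵀ − B(t)ᵀB(t)) = 0 for all t. -/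
/-- Update a single entry of a matrix (given as a function of two indices). -/
def updEntry {m n : ℕ} (A : Fin m → Fin n → ℝ) (i : Fin m) (j : Fin n) (s : ℝ) :
    Fin m → Fin n → ℝ :=
  fun i' j' => if i' = i ∧ j' = j then s else A i' j'

/-- Matrix product of functions of two indices. -/
def matMul {m n p : ℕ} (B : Fin m → Fin n → ℝ) (A : Fin n → Fin p → ℝ) :
    Fin m → Fin p → ℝ :=
  fun i j => ∑ l, B i l * A l j

/-!
Let `DG` be the derivative of `M ↦ G M (θ t)` at `B t · A t`. Since `B · A` is affine in each
single entry of `A` or `B`, the partial derivative of the loss in `A l j` is `DG (B_{·l} e_jᵀ)`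
and in `B r l` it is `DG (e_r A_{l·})`. Summing, both `d/dt (A Aᵀ) i i'` and
`d/dt (Bᵀ B) i i'` equal `-DG (B_{·i} A_{i'·} + B_{·i'} A_{i·})`.
-/

def outer {ι κ : Type*} (u : ι → ℝ) (v : κ → ℝ) : ι → κ → ℝ := fun p q => u p * v q

theorem sum_ite_eq_sum_add_sub {ι M : Type*} [Fintype ι] [DecidableEq ι] [AddCommGroup M]
    (f g : ι → M) (l : ι) : (∑ x, if x = l then g x else f x) = ∑ x, f x + (g l - f l) := by
  rw [← Finset.add_sum_erase _ _ (Finset.mem_univ l),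
    ← Finset.add_sum_erase _ _ (Finset.mem_univ l), if_pos rfl,
    Finset.sum_congr rfl fun x hx => if_neg (Finset.ne_of_mem_erase hx)]
  abel

theorem matMul_updEntry_right {m n p : ℕ} (B : Fin m → Fin n → ℝ) (A : Fin n → Fin p → ℝ)
    (l : Fin n) (j : Fin p) (s : ℝ) :
    matMul B (updEntry A l j s) =
      matMul B A + (s - A l j) • outer (fun r => B r l) (Pi.single j 1) := by
  funext r q
  by_cases hq : q = j
  · subst hq
    simp only [matMul, updEntry, outer, and_true, mul_ite, sum_ite_eq_sum_add_sub, Pi.add_apply,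
      Pi.smul_apply, Pi.single_eq_same, mul_one, smul_eq_mul]
    ring
  · simp [matMul, updEntry, outer, hq]

theorem matMul_updEntry_left {m n p : ℕ} (B : Fin m → Fin n → ℝ) (A : Fin n → Fin p → ℝ)
    (r : Fin m) (l : Fin n) (s : ℝ) :
    matMul (updEntry B r l s) A = matMul B A + (s - B r l) • outer (Pi.single r 1) (A l) := by
  funext r' q
  by_cases hr : r' = r
  · subst hr
    simp only [matMul, updEntry, outer, true_and, ite_mul, sum_ite_eq_sum_add_sub, Pi.add_apply,
      Pi.smul_apply, Pi.single_eq_same, one_mul, smul_eq_mul]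
    ring
  · simp [matMul, updEntry, outer, hr]

theorem deriv_comp_add_sub_smul {E F : Type*} [NormedAddCommGroup E] [NormedSpace ℝ E]
    [NormedAddCommGroup F] [NormedSpace ℝ F] {g : E → F} {M : E} (hg : DifferentiableAt ℝ g M)
    (V : E) (x : ℝ) : deriv (fun s : ℝ => g (M + (s - x) • V)) x = fderiv ℝ g M V := by
  have hline : HasDerivAt (fun s : ℝ => M + (s - x) • V) V x := by
    simpa using (((hasDerivAt_id x).sub_const x).smul_const V).const_add M
  exact (hg.hasFDerivAt.comp_hasDerivAt_of_eq x hline (by simp)).deriv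

section
variable {F : Type*} [NormedAddCommGroup F] [NormedSpace ℝ F] {m n p : ℕ}
  {g : (Fin m → Fin p → ℝ) → F} {B : Fin m → Fin n → ℝ} {A : Fin n → Fin p → ℝ}

theorem deriv_comp_matMul_updEntry_right (hg : DifferentiableAt ℝ g (matMul B A))
    (l : Fin n) (j : Fin p) :
    deriv (fun s => g (matMul B (updEntry A l j s))) (A l j) =
      fderiv ℝ g (matMul B A) (outer (fun r => B r l) (Pi.single j 1)) := by
  simp only [matMul_updEntry_right]
  exact deriv_comp_add_sub_smul hg _ _

theorem deriv_comp_matMul_updEntry_left (hg : DifferentiableAt ℝ g (matMul B A))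
    (r : Fin m) (l : Fin n) :
    deriv (fun s => g (matMul (updEntry B r l s) A)) (B r l) =
      fderiv ℝ g (matMul B A) (outer (Pi.single r 1) (A l)) := by
  simp only [matMul_updEntry_left]
  exact deriv_comp_add_sub_smul hg _ _

end

theorem sum_smul_outer_single_right {ι κ : Type*} [Fintype κ] [DecidableEq κ]
    (u : ι → ℝ) (v : κ → ℝ) : ∑ j, v j • outer u (Pi.single j 1) = outer u v := by
  funext p q
  simp [outer, Finset.sum_apply, Pi.single_apply, mul_comm]

theorem sum_smul_outer_single_left {ι κ : Type*} [Fintype ι] [DecidableEq ι]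
    (u : ι → ℝ) (v : κ → ℝ) : ∑ p, u p • outer (Pi.single p 1) v = outer u v := by
  funext p q
  simp [outer, Finset.sum_apply, Pi.single_apply]

theorem hasDerivAt_sum_mul_of_hasDerivAt_neg {ι E : Type*} [Fintype ι] [AddCommGroup E]
    [Module ℝ E] (L : E →ₗ[ℝ] ℝ) {u v : ℝ → ι → ℝ} {U V : ι → E} {t : ℝ}
    (hu : ∀ j, HasDerivAt (fun τ => u τ j) (-L (U j)) t)
    (hv : ∀ j, HasDerivAt (fun τ => v τ j) (-L (V j)) t) :
    HasDerivAt (fun τ => ∑ j, u τ j * v τ j) (-L (∑ j, (v t j • U j + u t j • V j))) t := by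
  refine (HasDerivAt.fun_sum (u := Finset.univ) fun j _ => (hu j).fun_mul (hv j)).congr_deriv ?_
  simp only [map_sum, map_add, map_smul, smul_eq_mul, ← Finset.sum_neg_distrib]
  exact Finset.sum_congr rfl fun j _ => by ring

theorem gradient_flow_conserves_linear_balancedness_general {a b c k : ℕ}
    (G : (Fin c → Fin b → ℝ) → (Fin k → ℝ) → ℝ)
    (hG : Differentiable ℝ (fun p : (Fin c → Fin b → ℝ) × (Fin k → ℝ) => G p.1 p.2))
    (A : ℝ → Fin a → Fin b → ℝ) (B : ℝ → Fin c → Fin a → ℝ) (θ : ℝ → Fin k → ℝ)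
    (hA : ∀ (t : ℝ) (i : Fin a) (j : Fin b),
      HasDerivAt (fun τ => A τ i j)
        (-(deriv (fun s => G (matMul (B t) (updEntry (A t) i j s)) (θ t)) (A t i j))) t)
    (hB : ∀ (t : ℝ) (p : Fin c) (l : Fin a),
      HasDerivAt (fun τ => B τ p l)
        (-(deriv (fun s => G (matMul (updEntry (B t) p l s) (A t)) (θ t)) (B t p l))) t)
    (t : ℝ) (i i' : Fin a) :
    HasDerivAt
      (fun τ => (∑ j, A τ i j * A τ i' j) - ∑ p, B τ p i * B τ p i') 0 t := by
  have hg : DifferentiableAt ℝ (fun M => G M (θ t)) (matMul (B t) (A t)) :=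
    (hG.comp (differentiable_id.prodMk (differentiable_const (θ t)))).differentiableAt
  set L := fderiv ℝ (fun M => G M (θ t)) (matMul (B t) (A t))
  have hA' (l : Fin a) (j : Fin b) :
      HasDerivAt (fun τ => A τ l j) (-L (outer (fun r => B t r l) (Pi.single j 1))) t := by
    simpa only [deriv_comp_matMul_updEntry_right hg] using hA t l j
  have hB' (r : Fin c) (l : Fin a) :
      HasDerivAt (fun τ => B τ r l) (-L (outer (Pi.single r 1) (A t l))) t := by
    simpa only [deriv_comp_matMul_updEntry_left hg] using hB t r l
  have hAAt := hasDerivAt_sum_mul_of_hasDerivAt_neg L.toLinearMap (hA' i) (hA' i')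
  have hBtB := hasDerivAt_sum_mul_of_hasDerivAt_neg L.toLinearMap
    (u := fun τ r => B τ r i) (v := fun τ r => B τ r i') (hB' · i) (hB' · i')
  simp only [Finset.sum_add_distrib, sum_smul_outer_single_right,
    sum_smul_outer_single_left] at hAAt hBtB
  simpa only [add_comm (outer (fun r => B t r i') (A t i)), sub_self] using hAAt.fun_sub hBtB

/-- If the (differentiable) loss depends on two consecutive layers `A ∈ ℝ^{a×b}`,
`B ∈ ℝ^{c×a}` only through their product, `L(A,B,θ) = G(B·A, θ)`, and `A, B, θ`
evolve under gradient flow, then `AAᵀ − BᵀB` is conserved: each of its entries has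
zero time derivative. -/
theorem gradient_flow_conserves_linear_balancedness {a b c k : ℕ}
    (G : (Fin c → Fin b → ℝ) → (Fin k → ℝ) → ℝ)
    (hG : Differentiable ℝ (fun p : (Fin c → Fin b → ℝ) × (Fin k → ℝ) => G p.1 p.2))
    (A : ℝ → Fin a → Fin b → ℝ) (B : ℝ → Fin c → Fin a → ℝ) (θ : ℝ → Fin k → ℝ)
    (hA : ∀ (t : ℝ) (i : Fin a) (j : Fin b),
      HasDerivAt (fun τ => A τ i j)
        (-(deriv (fun s => G (matMul (B t) (updEntry (A t) i j s)) (θ t)) (A t i j))) t)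
    (hB : ∀ (t : ℝ) (p : Fin c) (l : Fin a),
      HasDerivAt (fun τ => B τ p l)
        (-(deriv (fun s => G (matMul (updEntry (B t) p l s) (A t)) (θ t)) (B t p l))) t)
    (hθ : ∀ (t : ℝ) (q : Fin k),
      HasDerivAt (fun τ => θ τ q)
        (-(deriv (fun s => G (matMul (B t) (A t)) (Function.update (θ t) q s)) (θ t q))) t)
    (t : ℝ) (i i' : Fin a) :
    HasDerivAt
      (fun τ => (∑ j, A τ i j * A τ i' j) - ∑ p, B τ p i * B τ p i') 0 t :=
  gradient_flow_conserves_linear_balancedness_general G hG A B θ hA hB t i i'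
end

section
/- Consider a feed-forward network with N ≥ 2 layers in which layer h is parameterized by a free-parameter vector v^(h) ∈ ℝ^{d_h} through a sparsity/weight-sharing pattern g_h (so the weight matrix W^(h) has entries W^(h)[i,j] = 0 if g_h(i,j) = 0 and W^(h)[i,j] = v^(h)[g_h(i,j)] otherwise), with differentiable homogeneous activations. If the free parameters evolve under gradient flow, d/dt v^(h)(t) = −∂L(v(t))/∂v^(h), then for every h ∈ {1,…,N−1} the quantity ‖v^(h)(t)‖₂² − ‖v^(h+1)(t)‖₂² is constant in t; equivalently, its time derivative is zero for all t. -/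
/-- The layer-`h` weight matrix determined by free parameters `v h : Fin (d h) → ℝ`
and a sparsity/weight-sharing pattern `g h` (`g h i j = none` means the entry is
fixed to `0`, `g h i j = some k` means the entry is the shared parameter `v h k`). -/
def sharedWeights (n d : ℕ → ℕ)
    (g : (h : ℕ) → Fin (n (h + 1)) → Fin (n h) → Option (Fin (d h)))
    (v : (h : ℕ) → Fin (d h) → ℝ) (h : ℕ) :
    Matrix (Fin (n (h + 1))) (Fin (n h)) ℝ :=
  Matrix.of fun i j =>
    match g h i j with
    | none => 0
    | some k => v h k

/-- The vector of values computed at layer `h` of the network with weight matrices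
`W h` and coordinate-wise activations `φ h` (with `φ 0 = id`, layer `0` the input). -/
def netOut (n : ℕ → ℕ) (φ : ℕ → ℝ → ℝ)
    (W : (h : ℕ) → Matrix (Fin (n (h + 1))) (Fin (n h)) ℝ)
    (x : Fin (n 0) → ℝ) : (h : ℕ) → Fin (n h) → ℝ
  | 0 => x
  | h + 1 => (W h).mulVec fun j => φ h (netOut n φ W x h j)

/-- Replace the `k`-th free parameter of layer `h` by `s`. -/
def updParam (d : ℕ → ℕ) (v : (h : ℕ) → Fin (d h) → ℝ) (h : ℕ) (k : Fin (d h))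
    (s : ℝ) : (h' : ℕ) → Fin (d h') → ℝ :=
  Function.update v h (Function.update (v h) k s)

/-- The training loss `L(v) = (1/m) ∑ₖ ℓ(f_w(xₖ), yₖ)` of an `N`-layer network with
sparse connections and shared weights, as a function of the free parameters `v`. -/
noncomputable def trainLossShared (n d : ℕ → ℕ) (N m : ℕ) (φ : ℕ → ℝ → ℝ)
    (g : (h : ℕ) → Fin (n (h + 1)) → Fin (n h) → Option (Fin (d h)))
    (ℓ : (Fin (n N) → ℝ) → (Fin (n N) → ℝ) → ℝ)
    (x : Fin m → Fin (n 0) → ℝ) (y : Fin m → Fin (n N) → ℝ)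
    (v : (h : ℕ) → Fin (d h) → ℝ) : ℝ :=
  (1 / (m : ℝ)) * ∑ k, ℓ (netOut n φ (sharedWeights n d g v) (x k) N) (y k)

/-!
Because the activations are positively homogeneous, multiplying the free parameters of layer `k`
by `c > 0` and those of layer `k + 1` by `c⁻¹` leaves the network, hence the loss, unchanged.
Differentiating this invariance at `c = 1` gives `⟨v⁽ᵏ⁾, ∇_{v⁽ᵏ⁾} L⟩ = ⟨v⁽ᵏ⁺¹⁾, ∇_{v⁽ᵏ⁺¹⁾} L⟩`,
while along the gradient flow `d/dt ‖v⁽ʰ⁾‖² = -2 ⟨v⁽ʰ⁾, ∇_{v⁽ʰ⁾} L⟩`.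
-/

theorem apply_mul_of_deriv_mul_self_eq {φ : ℝ → ℝ} (hφ : Differentiable ℝ φ)
    (hhom : ∀ x, deriv φ x * x = φ x) {c : ℝ} (hc : 0 < c) (x : ℝ) :
    φ (c * x) = c * φ x := by
  have hderiv : ∀ b ∈ Set.Ioi (0 : ℝ),
      HasDerivAt (fun b => φ (b * x) * b⁻¹) 0 b := by
    intro b hb
    have hb₀ : b ≠ 0 := (Set.mem_Ioi.1 hb).ne'
    refine (((hφ (b * x)).hasDerivAt.comp b ((hasDerivAt_id b).mul_const x)).mul
      (hasDerivAt_inv hb₀)).congr_deriv ?_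
    simp only [Function.comp_def, id, one_mul]
    field_simp
    linear_combination hhom (b * x)
  have hconst := isOpen_Ioi.is_const_of_deriv_eq_zero (convex_Ioi 0).isPreconnected
    (fun b hb => (hderiv b hb).differentiableAt.differentiableWithinAt)
    (fun b hb => (hderiv b hb).deriv) hc (Set.mem_Ioi.mpr one_pos)
  simp only [one_mul, inv_one, mul_one] at hconst
  field_simp at hconst
  linear_combination hconst

theorem sum_mul_deriv_update_eq_of_rescale_invariant
    {ι κ : Type*} [Fintype ι] [Fintype κ] [DecidableEq ι] [DecidableEq κ]
    {G : (ι → ℝ) × (κ → ℝ) → ℝ} {u : ι → ℝ} {w : κ → ℝ}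
    (hG : DifferentiableAt ℝ G (u, w))
    (hinv : ∀ c : ℝ, 0 < c → G (c • u, c⁻¹ • w) = G (u, w)) :
    ∑ a, u a * deriv (fun s => G (Function.update u a s, w)) (u a) =
      ∑ b, w b * deriv (fun s => G (u, Function.update w b s)) (w b) := by
  set L := fderiv ℝ G (u, w)
  have hL : HasFDerivAt G L (u, w) := hG.hasFDerivAt
  have hfst : ∀ a,
      deriv (fun s => G (Function.update u a s, w)) (u a) = L (Pi.single a 1, 0) := fun a =>
    (hL.comp_hasDerivAt_of_eq (u a)
      ((hasDerivAt_update u a (u a)).prodMk (hasDerivAt_const _ w)) (by simp)).deriv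
  have hsnd : ∀ b,
      deriv (fun s => G (u, Function.update w b s)) (w b) = L (0, Pi.single b 1) := fun b =>
    (hL.comp_hasDerivAt_of_eq (w b)
      ((hasDerivAt_const _ u).prodMk (hasDerivAt_update w b (w b))) (by simp)).deriv
  have hrescale : HasDerivAt (fun c : ℝ => G (c • u, c⁻¹ • w)) (L (u, -w)) 1 :=
    (hL.comp_hasDerivAt_of_eq 1 (((hasDerivAt_id 1).smul_const u).prodMk
      ((hasDerivAt_inv one_ne_zero).smul_const w)) (by simp)).congr_deriv (by simp)
  have hrescale_zero : L (u, -w) = 0 := by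
    refine hrescale.unique ((hasDerivAt_const (1 : ℝ) (G (u, w))).congr_of_eventuallyEq ?_)
    filter_upwards [lt_mem_nhds one_pos] with c hc using hinv c hc
  have hsum_fst : ∑ a, u a * L (Pi.single a 1, 0) = L (u, 0) := by
    have := map_sum (L.comp (.inl ℝ _ (κ → ℝ))) (fun a => u a • Pi.single a (1 : ℝ)) Finset.univ
    rw [← pi_eq_sum_univ' u] at this
    simpa using this.symm
  have hsum_snd : ∑ b, w b * L (0, Pi.single b 1) = L (0, w) := by
    have := map_sum (L.comp (.inr ℝ (ι → ℝ) _)) (fun b => w b • Pi.single b (1 : ℝ)) Finset.univ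
    rw [← pi_eq_sum_univ' w] at this
    simpa using this.symm
  simp only [hfst, hsnd, hsum_fst, hsum_snd]
  rw [← sub_eq_zero, ← map_sub, Prod.mk_sub_mk, sub_zero, zero_sub, hrescale_zero]

theorem hasDerivAt_sum_sq {ι : Type*} [Fintype ι] {u : ℝ → ι → ℝ} {u' : ι → ℝ} {t : ℝ}
    (hu : ∀ a, HasDerivAt (fun τ => u τ a) (u' a) t) :
    HasDerivAt (fun τ => ∑ a, u τ a ^ 2) (2 * ∑ a, u t a * u' a) t := by
  refine (HasDerivAt.fun_sum fun a _ => (hu a).pow 2).congr_deriv ?_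
  rw [Finset.mul_sum]
  refine Finset.sum_congr rfl fun a _ => ?_
  push_cast
  ring

section Network

variable {n : ℕ → ℕ} {φ : ℕ → ℝ → ℝ}

theorem netOut_congr {W W' : (h : ℕ) → Matrix (Fin (n (h + 1))) (Fin (n h)) ℝ}
    (x : Fin (n 0) → ℝ) {h : ℕ} (hW : ∀ j < h, W j = W' j) :
    netOut n φ W x h = netOut n φ W' x h := by
  induction h with
  | zero => rfl
  | succ h ih =>
    simp only [netOut, hW h h.lt_succ_self, ih fun j hj => hW j (hj.trans h.lt_succ_self)]

theorem netOut_rescale_adjacent {W W' : (h : ℕ) → Matrix (Fin (n (h + 1))) (Fin (n h)) ℝ}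
    (x : Fin (n 0) → ℝ) {k : ℕ} {c : ℝ} (hc : c ≠ 0)
    (hφ : ∀ z, φ (k + 1) (c * z) = c * φ (k + 1) z)
    (hWk : W' k = c • W k) (hWk₁ : W' (k + 1) = c⁻¹ • W (k + 1))
    (hW : ∀ j, j ≠ k → j ≠ k + 1 → W' j = W j) {h : ℕ} (hh : k + 2 ≤ h) :
    netOut n φ W' x h = netOut n φ W x h := by
  induction h, hh using Nat.le_induction with
  | base =>
    have hk : netOut n φ W' x k = netOut n φ W x k :=
      netOut_congr x fun j hj => hW j hj.ne (by omega)
    have hk₁ : netOut n φ W' x (k + 1) = c • netOut n φ W x (k + 1) := by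
      simp only [netOut, hk, hWk, Matrix.smul_mulVec]
    have hφk₁ : (fun j => φ (k + 1) (netOut n φ W' x (k + 1) j)) =
        c • fun j => φ (k + 1) (netOut n φ W x (k + 1) j) := by
      ext j
      simp only [hk₁, Pi.smul_apply, smul_eq_mul, hφ]
    show (W' (k + 1)).mulVec _ = (W (k + 1)).mulVec _
    rw [hφk₁, hWk₁, Matrix.smul_mulVec, Matrix.mulVec_smul, smul_smul, inv_mul_cancel₀ hc,
      one_smul]
  | succ h hh ih =>
    simp only [netOut, ih, hW h (by omega) (by omega)]

theorem differentiable_netOut {P : Type*} [NormedAddCommGroup P] [NormedSpace ℝ P]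
    (hφ : ∀ h, Differentiable ℝ (φ h))
    {W : P → (h : ℕ) → Matrix (Fin (n (h + 1))) (Fin (n h)) ℝ}
    (hW : ∀ h i j, Differentiable ℝ fun p => W p h i j) (x : Fin (n 0) → ℝ) (h : ℕ) :
    Differentiable ℝ fun p => netOut n φ (W p) x h := by
  induction h with
  | zero => exact differentiable_const x
  | succ h ih =>
    refine differentiable_pi.2 fun i => ?_
    simp only [netOut, Matrix.mulVec, dotProduct]
    exact Differentiable.fun_sum fun j _ =>
      (hW h i j).mul ((hφ h).comp (differentiable_pi.1 ih j))

end Network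

section SharedWeights

variable {n d : ℕ → ℕ} (g : (h : ℕ) → Fin (n (h + 1)) → Fin (n h) → Option (Fin (d h)))

theorem sharedWeights_apply (v : (h : ℕ) → Fin (d h) → ℝ) (h : ℕ) (i : Fin (n (h + 1)))
    (j : Fin (n h)) : sharedWeights n d g v h i j = (g h i j).elim 0 (v h) := by
  simp only [sharedWeights, Matrix.of_apply]
  cases g h i j <;> rfl

theorem sharedWeights_congr {v v' : (h : ℕ) → Fin (d h) → ℝ} {h : ℕ} (hv : v' h = v h) :
    sharedWeights n d g v' h = sharedWeights n d g v h := by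
  ext i j
  simp only [sharedWeights_apply, hv]

theorem sharedWeights_smul {v v' : (h : ℕ) → Fin (d h) → ℝ} {h : ℕ} {c : ℝ}
    (hv : v' h = c • v h) : sharedWeights n d g v' h = c • sharedWeights n d g v h := by
  ext i j
  simp only [sharedWeights_apply, hv, Matrix.smul_apply]
  cases g h i j <;> simp

theorem differentiable_sharedWeights_apply {P : Type*} [NormedAddCommGroup P]
    [NormedSpace ℝ P] {V : P → (h : ℕ) → Fin (d h) → ℝ}
    (hV : ∀ h a, Differentiable ℝ fun p => V p h a) (h : ℕ) (i : Fin (n (h + 1)))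
    (j : Fin (n h)) : Differentiable ℝ fun p => sharedWeights n d g (V p) h i j := by
  simp only [sharedWeights_apply]
  cases g h i j with
  | none => exact differentiable_const 0
  | some a => exact hV h a

end SharedWeights

section AdjacentLayers

variable {d : ℕ → ℕ}

/-- The parameters form a dependent function on all of `ℕ`, which is not a normed space; this
exposes layers `k` and `k + 1` as a point of a finite-dimensional product, where the loss can be
differentiated. -/
def updateAdjacentLayers (v : (h : ℕ) → Fin (d h) → ℝ) (k : ℕ)
    (p : (Fin (d k) → ℝ) × (Fin (d (k + 1)) → ℝ)) : (h : ℕ) → Fin (d h) → ℝ :=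
  Function.update (Function.update v k p.1) (k + 1) p.2

variable (v : (h : ℕ) → Fin (d h) → ℝ) (k : ℕ)

@[simp]
theorem updateAdjacentLayers_apply_left (p : (Fin (d k) → ℝ) × (Fin (d (k + 1)) → ℝ)) :
    updateAdjacentLayers v k p k = p.1 := by
  rw [updateAdjacentLayers, Function.update_of_ne (Nat.succ_ne_self k).symm, Function.update_self]

@[simp]
theorem updateAdjacentLayers_apply_right (p : (Fin (d k) → ℝ) × (Fin (d (k + 1)) → ℝ)) :
    updateAdjacentLayers v k p (k + 1) = p.2 :=
  Function.update_self ..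

@[simp]
theorem updateAdjacentLayers_self : updateAdjacentLayers v k (v k, v (k + 1)) = v := by
  simp only [updateAdjacentLayers, Function.update_eq_self]

theorem updateAdjacentLayers_of_ne (p : (Fin (d k) → ℝ) × (Fin (d (k + 1)) → ℝ)) {h : ℕ}
    (hk : h ≠ k) (hk₁ : h ≠ k + 1) : updateAdjacentLayers v k p h = v h := by
  rw [updateAdjacentLayers, Function.update_of_ne hk₁, Function.update_of_ne hk]

theorem updParam_eq_updateAdjacentLayers_left (a : Fin (d k)) (s : ℝ) :
    updParam d v k a s = updateAdjacentLayers v k (Function.update (v k) a s, v (k + 1)) := by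
  simp only [updParam, updateAdjacentLayers]
  rw [← Function.update_of_ne (Nat.succ_ne_self k) (Function.update (v k) a s) v,
    Function.update_eq_self]

theorem updParam_eq_updateAdjacentLayers_right (a : Fin (d (k + 1))) (s : ℝ) :
    updParam d v (k + 1) a s =
      updateAdjacentLayers v k (v k, Function.update (v (k + 1)) a s) := by
  simp only [updParam, updateAdjacentLayers, Function.update_eq_self]

theorem differentiable_updateAdjacentLayers_apply (h : ℕ) (a : Fin (d h)) :
    Differentiable ℝ fun p => updateAdjacentLayers v k p h a := by
  by_cases hk : h = k
  · subst hk
    simp only [updateAdjacentLayers_apply_left]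
    fun_prop
  by_cases hk₁ : h = k + 1
  · subst hk₁
    simp only [updateAdjacentLayers_apply_right]
    fun_prop
  simp only [updateAdjacentLayers_of_ne v k _ hk hk₁]
  exact differentiable_const _

end AdjacentLayers

section TrainLoss

variable {n d : ℕ → ℕ} {N m : ℕ} {φ : ℕ → ℝ → ℝ}
  {g : (h : ℕ) → Fin (n (h + 1)) → Fin (n h) → Option (Fin (d h))}
  {ℓ : (Fin (n N) → ℝ) → (Fin (n N) → ℝ) → ℝ}
  (x : Fin m → Fin (n 0) → ℝ) (y : Fin m → Fin (n N) → ℝ)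

theorem differentiable_trainLossShared {P : Type*} [NormedAddCommGroup P] [NormedSpace ℝ P]
    (hφ : ∀ h, Differentiable ℝ (φ h)) (hℓ : ∀ y, Differentiable ℝ fun z => ℓ z y)
    {V : P → (h : ℕ) → Fin (d h) → ℝ} (hV : ∀ h a, Differentiable ℝ fun p => V p h a) :
    Differentiable ℝ fun p => trainLossShared n d N m φ g ℓ x y (V p) :=
  (Differentiable.fun_sum fun s _ => (hℓ (y s)).comp
    (differentiable_netOut hφ (differentiable_sharedWeights_apply g hV) (x s) N)).const_mul _

theorem trainLossShared_rescale_adjacent (v : (h : ℕ) → Fin (d h) → ℝ) {k : ℕ}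
    (hk : k + 2 ≤ N) {c : ℝ} (hc : c ≠ 0) (hφ : ∀ z, φ (k + 1) (c * z) = c * φ (k + 1) z) :
    trainLossShared n d N m φ g ℓ x y
        (updateAdjacentLayers v k (c • v k, c⁻¹ • v (k + 1))) =
      trainLossShared n d N m φ g ℓ x y v := by
  unfold trainLossShared
  congr 1
  refine Finset.sum_congr rfl fun s _ => ?_
  rw [netOut_rescale_adjacent (x s) hc hφ
    (sharedWeights_smul g (updateAdjacentLayers_apply_left v k _))
    (sharedWeights_smul g (updateAdjacentLayers_apply_right v k _))
    (fun j hj hj₁ => sharedWeights_congr g (updateAdjacentLayers_of_ne v k _ hj hj₁)) hk]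

end TrainLoss

/-- In the paper's 1-based numbering, `v k` and `v (k + 1)` are `v⁽ᵏ⁺¹⁾` and `v⁽ᵏ⁺²⁾`. -/
theorem gradient_flow_balances_shared_layers_general
    (n d : ℕ → ℕ) (N : ℕ) (m : ℕ)
    (φ : ℕ → ℝ → ℝ)
    (hφdiff : ∀ h, Differentiable ℝ (φ h))
    (hφhom : ∀ h x, deriv (φ h) x * x = φ h x)
    (g : (h : ℕ) → Fin (n (h + 1)) → Fin (n h) → Option (Fin (d h)))
    (ℓ : (Fin (n N) → ℝ) → (Fin (n N) → ℝ) → ℝ)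
    (hℓdiff : ∀ y, Differentiable ℝ fun z => ℓ z y)
    (x : Fin m → Fin (n 0) → ℝ) (y : Fin m → Fin (n N) → ℝ)
    (v : ℝ → (h : ℕ) → Fin (d h) → ℝ)
    (hGF : ∀ (t : ℝ) (h : ℕ), h < N → ∀ (k : Fin (d h)),
      HasDerivAt (fun τ => v τ h k)
        (-(deriv
            (fun s => trainLossShared n d N m φ g ℓ x y (updParam d (v t) h k s))
            (v t h k))) t)
    (k : ℕ) (hk : k + 1 < N) (t : ℝ) :
    HasDerivAt
      (fun τ => (∑ a, v τ k a ^ 2) - ∑ a, v τ (k + 1) a ^ 2) 0 t := by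
  have hbalance := sum_mul_deriv_update_eq_of_rescale_invariant
    (G := fun p => trainLossShared n d N m φ g ℓ x y (updateAdjacentLayers (v t) k p))
    (differentiable_trainLossShared x y hφdiff hℓdiff
      (differentiable_updateAdjacentLayers_apply (v t) k) _)
    fun c hc => by
      rw [trainLossShared_rescale_adjacent x y (v t) hk hc.ne'
        (fun z => apply_mul_of_deriv_mul_self_eq (hφdiff _) (hφhom _) hc z),
        updateAdjacentLayers_self]
  have hk' := hasDerivAt_sum_sq (hGF t k (by omega))
  have hk₁ := hasDerivAt_sum_sq (hGF t (k + 1) hk)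
  simp only [updParam_eq_updateAdjacentLayers_left (v t) k] at hk'
  simp only [updParam_eq_updateAdjacentLayers_right (v t) k] at hk₁
  refine (hk'.sub hk₁).congr_deriv ?_
  simp only [mul_neg, Finset.sum_neg_distrib, hbalance, sub_self]

/-- **Auto-balancing for networks with sparse connections and shared weights**
(convolutional networks are a special case). If the free parameters of an `N ≥ 2`
layer network with differentiable homogeneous activations and differentiable loss
evolve under gradient flow, then for any two consecutive layers (`v k` and
`v (k+1)` with `k + 1 < N`, i.e. `v^{(k+1)}` and `v^{(k+2)}` in 1-based numbering)
the difference of the squared Euclidean norms of their free-parameter vectors has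
zero time derivative. -/
theorem gradient_flow_balances_shared_layers
    (n d : ℕ → ℕ) (N : ℕ) (hN : 2 ≤ N) (m : ℕ)
    (φ : ℕ → ℝ → ℝ)
    (hφdiff : ∀ h, Differentiable ℝ (φ h))
    (hφhom : ∀ h x, deriv (φ h) x * x = φ h x)
    (hφ0 : ∀ x, φ 0 x = x)
    (g : (h : ℕ) → Fin (n (h + 1)) → Fin (n h) → Option (Fin (d h)))
    (ℓ : (Fin (n N) → ℝ) → (Fin (n N) → ℝ) → ℝ)
    (hℓdiff : ∀ y, Differentiable ℝ fun z => ℓ z y)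
    (hℓnonneg : ∀ z y, 0 ≤ ℓ z y)
    (x : Fin m → Fin (n 0) → ℝ) (y : Fin m → Fin (n N) → ℝ)
    (v : ℝ → (h : ℕ) → Fin (d h) → ℝ)
    (hGF : ∀ (t : ℝ) (h : ℕ), h < N → ∀ (k : Fin (d h)),
      HasDerivAt (fun τ => v τ h k)
        (-(deriv
            (fun s => trainLossShared n d N m φ g ℓ x y (updParam d (v t) h k s))
            (v t h k))) t)
    (k : ℕ) (hk : k + 1 < N) (t : ℝ) :
    HasDerivAt
      (fun τ => (∑ a, v τ k a ^ 2) - ∑ a, v τ (k + 1) a ^ 2) 0 t :=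
  gradient_flow_balances_shared_layers_general n d N m φ hφdiff hφhom g ℓ hℓdiff x y v hGF k hk t
end

section
/- Let 0 < ε < ‖M*‖_F and suppose the initialization satisfies ‖U₀‖_F² ≤ ε, ‖V₀‖_F² ≤ ε, and ‖U₀ᵀU₀ − V₀ᵀV₀‖_F ≤ ε/2. Run gradient descent with step sizes η_t = √(ε/r) / (100·(t+1)·‖M*‖_F^{3/2}). Then for every t ≥ 0: (i) balancedness: ‖U_tᵀU_t − V_tᵀV_t‖_F ≤ ε; (ii) the objective is non-increasing: f(U_t, V_t) ≤ f(U_{t-1}, V_{t-1}) ≤ ⋯ ≤ f(U₀, V₀) ≤ 2‖M*‖_F²; (iii) boundedness: ‖U_t‖_F² ≤ 5√r·‖M*‖_F and ‖V_t‖_F² ≤ 5√r·‖M*‖_F. -/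
open Matrix

/-- Frobenius norm of a real matrix. -/
noncomputable def frob {m n : Type*} [Fintype m] [Fintype n] (A : Matrix m n ℝ) : ℝ :=
  Real.sqrt (∑ i, ∑ j, A i j ^ 2)

/-- The asymmetric matrix factorization objective `f(U,V) = ½‖UVᵀ − M*‖_F²`. -/
noncomputable def mfObj {d₁ d₂ r : ℕ} (M : Matrix (Fin d₁) (Fin d₂) ℝ)
    (U : Matrix (Fin d₁) (Fin r) ℝ) (V : Matrix (Fin d₂) (Fin r) ℝ) : ℝ :=
  (1 / 2) * frob (U * Vᵀ - M) ^ 2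

/-!
Write `E = UVᵀ - M` for the residual and `D = UᵀU - VᵀV` for the imbalance, with the Frobenius
inner product `⟨A, B⟩ = tr (AᵀB)`. In one gradient step the first-order terms of `D` cancel, so `D`
moves by `η² ((EV)ᵀEV - (EᵀU)ᵀEᵀU)`; while the iterates are bounded this is `O(η_t²)`, and
`∑ η_t² < ∞` keeps `‖D_t‖ ≤ ε`. The residual becomes `E - η (UUᵀE + EVVᵀ) + η² EVUᵀE`, whose
first-order part pairs with `E` to `-η (‖UᵀE‖² + ‖EV‖²)`, so small steps do not increase `‖E‖`.
Conversely, a small residual and a small imbalance bound the iterates: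
`‖UᵀU‖² = ⟨UᵀU, VᵀV⟩ + ⟨UᵀU, D⟩ ≤ ‖UVᵀ‖² + ‖UᵀU‖ ‖D‖` and `‖U‖² = tr (UᵀU) ≤ √r ‖UᵀU‖`.
The three bounds are therefore proved together, by induction on `t`.
-/

section Frobenius

open scoped Matrix.Norms.Frobenius

namespace Matrix

variable {m n k : Type*} [Fintype m] [Fintype n] [Fintype k]

theorem trace_transpose_mul_eq_sum (A B : Matrix m n ℝ) :
    (Aᵀ * B).trace = ∑ i, ∑ j, A i j * B i j := by
  simp only [trace, diag, mul_apply, transpose_apply]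
  exact Finset.sum_comm

-- The Frobenius norm is by definition the `L²` norm of the rows; `tr (AᵀB)` is its inner product.
theorem inner_toLp_eq_trace (A B : Matrix m n ℝ) :
    inner ℝ (WithLp.toLp 2 fun i ↦ WithLp.toLp 2 (A i) : PiLp 2 fun _ : m ↦ EuclideanSpace ℝ n)
      (WithLp.toLp 2 fun i ↦ WithLp.toLp 2 (B i)) = (Aᵀ * B).trace := by
  simp [PiLp.inner_apply, trace_transpose_mul_eq_sum, mul_comm]

theorem frobenius_norm_sq_eq_trace (A : Matrix m n ℝ) : ‖A‖ ^ 2 = (Aᵀ * A).trace := by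
  rw [← inner_toLp_eq_trace, real_inner_self_eq_norm_sq]
  rfl

theorem trace_transpose_mul_le (A B : Matrix m n ℝ) : (Aᵀ * B).trace ≤ ‖A‖ * ‖B‖ := by
  rw [← inner_toLp_eq_trace]
  exact real_inner_le_norm _ _

theorem frobenius_norm_add_sq (A B : Matrix m n ℝ) :
    ‖A + B‖ ^ 2 = ‖A‖ ^ 2 + 2 * (Aᵀ * B).trace + ‖B‖ ^ 2 := by
  simp only [frobenius_norm_sq_eq_trace, transpose_add, Matrix.add_mul, Matrix.mul_add, trace_add]
  rw [← trace_transpose (Bᵀ * A), transpose_mul, transpose_transpose]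
  ring

theorem frobenius_norm_transpose_mul_self_le (A : Matrix m n ℝ) : ‖Aᵀ * A‖ ≤ ‖A‖ ^ 2 := by
  simpa [sq, frobenius_norm_transpose] using frobenius_norm_mul Aᵀ A

theorem frobenius_norm_sq_le_sqrt_card_mul (A : Matrix m n ℝ) :
    ‖A‖ ^ 2 ≤ √(Fintype.card n) * ‖Aᵀ * A‖ := by
  classical
  have hone : ‖(1 : Matrix n n ℝ)‖ = √(Fintype.card n) := by
    simpa using congr_arg NNReal.toReal (frobenius_nnnorm_one (n := n) (α := ℝ))
  rw [frobenius_norm_sq_eq_trace, ← hone]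
  simpa using trace_transpose_mul_le (1 : Matrix n n ℝ) (Aᵀ * A)

theorem frobenius_norm_transpose_mul_self_le_add (U : Matrix m k ℝ) (V : Matrix n k ℝ) :
    ‖Uᵀ * U‖ ≤ ‖U * Vᵀ‖ + ‖Uᵀ * U - Vᵀ * V‖ := by
  have hcross : ((Uᵀ * U)ᵀ * (Vᵀ * V)).trace = ‖U * Vᵀ‖ ^ 2 := by
    simp only [frobenius_norm_sq_eq_trace, transpose_mul, transpose_transpose, Matrix.mul_assoc]
    rw [trace_mul_comm V, Matrix.mul_assoc, Matrix.mul_assoc]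
  have hsq : ‖Uᵀ * U‖ ^ 2 ≤ ‖U * Vᵀ‖ ^ 2 + ‖Uᵀ * U‖ * ‖Uᵀ * U - Vᵀ * V‖ :=
    calc ‖Uᵀ * U‖ ^ 2
        = ((Uᵀ * U)ᵀ * (Vᵀ * V)).trace + ((Uᵀ * U)ᵀ * (Uᵀ * U - Vᵀ * V)).trace := by
          rw [← trace_add, ← Matrix.mul_add, add_sub_cancel, frobenius_norm_sq_eq_trace]
      _ ≤ ‖U * Vᵀ‖ ^ 2 + ‖Uᵀ * U‖ * ‖Uᵀ * U - Vᵀ * V‖ := by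
          grw [hcross, trace_transpose_mul_le]
  nlinarith [norm_nonneg (U * Vᵀ), norm_nonneg (Uᵀ * U - Vᵀ * V), norm_nonneg (Uᵀ * U)]

theorem frobenius_norm_sq_le_of_balance (U : Matrix m k ℝ) (V : Matrix n k ℝ) :
    ‖U‖ ^ 2 ≤ √(Fintype.card k) * (‖U * Vᵀ‖ + ‖Uᵀ * U - Vᵀ * V‖) :=
  (frobenius_norm_sq_le_sqrt_card_mul U).trans <|
    mul_le_mul_of_nonneg_left (frobenius_norm_transpose_mul_self_le_add U V) (Real.sqrt_nonneg _)

theorem frobenius_norm_sq_right_le_of_balance (U : Matrix m k ℝ) (V : Matrix n k ℝ) :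
    ‖V‖ ^ 2 ≤ √(Fintype.card k) * (‖U * Vᵀ‖ + ‖Uᵀ * U - Vᵀ * V‖) := by
  simpa [← frobenius_norm_transpose (U * Vᵀ), norm_sub_rev (Vᵀ * V)] using
    frobenius_norm_sq_le_of_balance V U

theorem frobenius_norm_sub_smul_add_smul_le {E G H : Matrix m n ℝ} {η q K B : ℝ} (hη : 0 ≤ η)
    (hq : 0 ≤ q) (hG : (Eᵀ * G).trace = q) (hH : (Eᵀ * H).trace ≤ K * q / 2)
    (hGq : ‖G‖ ^ 2 ≤ 2 * B * q) (hHq : ‖H‖ ^ 2 ≤ K ^ 2 * B * q)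
    (hstep : η * (K + 4 * B + 2 * η ^ 2 * K ^ 2 * B) ≤ 2) :
    ‖E - η • G + η ^ 2 • H‖ ≤ ‖E‖ := by
  have hcross : (Eᵀ * (-η • G + η ^ 2 • H)).trace ≤ -η * q + η ^ 2 * (K * q / 2) := by
    rw [Matrix.mul_add, trace_add, Matrix.mul_smul, Matrix.mul_smul, trace_smul, trace_smul, hG,
      smul_eq_mul, smul_eq_mul]
    gcongr
  have hsmall : ‖-η • G + η ^ 2 • H‖ ^ 2 ≤ 2 * η ^ 2 * (2 * B * q) + 2 * η ^ 4 * (K ^ 2 * B * q) :=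
    calc ‖-η • G + η ^ 2 • H‖ ^ 2 ≤ (η * ‖G‖ + η ^ 2 * ‖H‖) ^ 2 := by
          gcongr
          refine (norm_add_le _ _).trans_eq ?_
          rw [norm_smul, norm_smul, norm_neg, Real.norm_of_nonneg hη,
            Real.norm_of_nonneg (sq_nonneg η)]
      _ ≤ 2 * ((η * ‖G‖) ^ 2 + (η ^ 2 * ‖H‖) ^ 2) := add_sq_le
      _ = 2 * η ^ 2 * ‖G‖ ^ 2 + 2 * η ^ 4 * ‖H‖ ^ 2 := by ring
      _ ≤ 2 * η ^ 2 * (2 * B * q) + 2 * η ^ 4 * (K ^ 2 * B * q) := by gcongr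
  have hsq : ‖E - η • G + η ^ 2 • H‖ ^ 2 ≤ ‖E‖ ^ 2 := by
    rw [sub_eq_add_neg, add_assoc, ← neg_smul, frobenius_norm_add_sq]
    nlinarith [mul_nonneg (mul_nonneg hη hq) (sub_nonneg.2 hstep)]
  exact (sq_le_sq₀ (norm_nonneg _) (norm_nonneg _)).1 hsq

end Matrix

theorem frob_eq_norm {m n : Type*} [Fintype m] [Fintype n] (A : Matrix m n ℝ) : frob A = ‖A‖ := by
  rw [frob, ← Real.sqrt_sq (norm_nonneg A), Matrix.frobenius_norm_sq_eq_trace,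
    Matrix.trace_transpose_mul_eq_sum]
  simp [sq]

namespace MatrixFactorization

variable {m n k : Type*} [Fintype m] [Fintype n]

section GradientStep

variable (M E : Matrix m n ℝ) (U : Matrix m k ℝ) (V : Matrix n k ℝ) (η : ℝ)

theorem gradient_step_balance_eq :
    (U - η • (E * V))ᵀ * (U - η • (E * V)) - (V - η • (Eᵀ * U))ᵀ * (V - η • (Eᵀ * U)) =
      (Uᵀ * U - Vᵀ * V) + η ^ 2 • ((E * V)ᵀ * (E * V) - (Eᵀ * U)ᵀ * (Eᵀ * U)) := by
  simp only [transpose_sub, transpose_smul, Matrix.sub_mul, Matrix.mul_sub, Matrix.smul_mul,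
    Matrix.mul_smul, transpose_mul, transpose_transpose, Matrix.mul_assoc, pow_two]
  module

variable [Fintype k]

theorem frobenius_norm_gradient_step_balance_le :
    ‖(U - η • (E * V))ᵀ * (U - η • (E * V)) - (V - η • (Eᵀ * U))ᵀ * (V - η • (Eᵀ * U))‖ ≤
      ‖Uᵀ * U - Vᵀ * V‖ + η ^ 2 * (‖E * V‖ ^ 2 + ‖Eᵀ * U‖ ^ 2) := by
  rw [gradient_step_balance_eq]
  grw [norm_add_le, norm_smul, Real.norm_of_nonneg (sq_nonneg η), norm_sub_le ((E * V)ᵀ * _),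
    frobenius_norm_transpose_mul_self_le (E * V), frobenius_norm_transpose_mul_self_le (Eᵀ * U)]

theorem gradient_step_residual_eq :
    (U - η • (E * V)) * (V - η • (Eᵀ * U))ᵀ - M =
      (U * Vᵀ - M) - η • (U * (Uᵀ * E) + E * V * Vᵀ) + η ^ 2 • (E * V * (Uᵀ * E)) := by
  simp only [transpose_sub, transpose_smul, Matrix.sub_mul, Matrix.mul_sub, Matrix.smul_mul,
    Matrix.mul_smul, transpose_mul, transpose_transpose, Matrix.mul_assoc, pow_two]
  module

theorem frobenius_norm_gradient_step_residual_le {K B : ℝ} (hη : 0 ≤ η)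
    (hE : ‖U * Vᵀ - M‖ ≤ K) (hU : ‖U‖ ^ 2 ≤ B) (hV : ‖V‖ ^ 2 ≤ B)
    (hstep : η * (K + 4 * B + 2 * η ^ 2 * K ^ 2 * B) ≤ 2) :
    ‖(U - η • ((U * Vᵀ - M) * V)) * (V - η • ((U * Vᵀ - M)ᵀ * U))ᵀ - M‖ ≤ ‖U * Vᵀ - M‖ := by
  rw [gradient_step_residual_eq]
  generalize U * Vᵀ - M = E at hE ⊢
  have hK : 0 ≤ K := (norm_nonneg E).trans hE
  have ha : ‖E * V‖ ^ 2 ≤ K ^ 2 * B := by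
    grw [frobenius_norm_mul E V, mul_pow, hE, hV]
  set a := ‖E * V‖
  set b := ‖Uᵀ * E‖
  have hfirst : (Eᵀ * (U * (Uᵀ * E) + E * V * Vᵀ)).trace = a ^ 2 + b ^ 2 := by
    rw [Matrix.mul_add, trace_add, frobenius_norm_sq_eq_trace, frobenius_norm_sq_eq_trace]
    simp only [transpose_mul, transpose_transpose, Matrix.mul_assoc]
    rw [trace_mul_comm Vᵀ, add_comm]
    simp only [Matrix.mul_assoc]
  have hsecond : (Eᵀ * (E * V * (Uᵀ * E))).trace ≤ K * (a ^ 2 + b ^ 2) / 2 := by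
    have hsplit : Eᵀ * (E * V * (Uᵀ * E)) = ((E * V)ᵀ * E)ᵀ * (Uᵀ * E) := by
      simp only [transpose_mul, transpose_transpose, Matrix.mul_assoc]
    calc (Eᵀ * (E * V * (Uᵀ * E))).trace ≤ ‖(E * V)ᵀ * E‖ * b := by
          rw [hsplit]
          exact trace_transpose_mul_le _ _
      _ ≤ a * K * b := by grw [frobenius_norm_mul, frobenius_norm_transpose, hE]
      _ ≤ K * (a ^ 2 + b ^ 2) / 2 := by nlinarith [mul_nonneg hK (sq_nonneg (a - b))]
  have hG : ‖U * (Uᵀ * E) + E * V * Vᵀ‖ ^ 2 ≤ 2 * B * (a ^ 2 + b ^ 2) :=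
    calc ‖U * (Uᵀ * E) + E * V * Vᵀ‖ ^ 2 ≤ (‖U‖ * b + a * ‖V‖) ^ 2 := by
          grw [norm_add_le, frobenius_norm_mul U, frobenius_norm_mul (E * V),
            frobenius_norm_transpose]
      _ ≤ (‖U‖ ^ 2 + ‖V‖ ^ 2) * (a ^ 2 + b ^ 2) := by nlinarith [sq_nonneg (‖U‖ * a - ‖V‖ * b)]
      _ ≤ 2 * B * (a ^ 2 + b ^ 2) := by nlinarith [sq_nonneg a, sq_nonneg b]
  have hH : ‖E * V * (Uᵀ * E)‖ ^ 2 ≤ K ^ 2 * B * (a ^ 2 + b ^ 2) :=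
    calc ‖E * V * (Uᵀ * E)‖ ^ 2 ≤ a ^ 2 * b ^ 2 := by
          rw [← mul_pow]
          grw [frobenius_norm_mul (E * V)]
      _ ≤ K ^ 2 * B * (a ^ 2 + b ^ 2) := by
          grw [ha]
          nlinarith [mul_nonneg (pow_two_nonneg K) (sq_nonneg a)]
  exact Matrix.frobenius_norm_sub_smul_add_smul_le hη (by positivity) hfirst hsecond hG hH hstep

end GradientStep

variable [Fintype k]

theorem frobenius_norm_sq_factors_le {M : Matrix m n ℝ} {U : Matrix m k ℝ} {V : Matrix n k ℝ}
    (hE : ‖U * Vᵀ - M‖ ≤ 2 * ‖M‖) (hD : ‖Uᵀ * U - Vᵀ * V‖ ≤ ‖M‖) :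
    ‖U‖ ^ 2 ≤ 4 * √(Fintype.card k) * ‖M‖ ∧ ‖V‖ ^ 2 ≤ 4 * √(Fintype.card k) * ‖M‖ := by
  have hUV : ‖U * Vᵀ‖ + ‖Uᵀ * U - Vᵀ * V‖ ≤ 4 * ‖M‖ := by
    grw [← sub_add_cancel (U * Vᵀ) M, norm_add_le, hE, hD]
    linarith
  have hk := mul_le_mul_of_nonneg_left hUV (Real.sqrt_nonneg (Fintype.card k))
  constructor
  · linarith [frobenius_norm_sq_le_of_balance U V]
  · linarith [frobenius_norm_sq_right_le_of_balance U V]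

theorem gradient_step_invariants {M : Matrix m n ℝ} {U U' : Matrix m k ℝ} {V V' : Matrix n k ℝ}
    {η : ℝ} (hU' : U' = U - η • ((U * Vᵀ - M) * V)) (hV' : V' = V - η • ((U * Vᵀ - M)ᵀ * U))
    (hη : 0 ≤ η) (hηM : η * ‖M‖ ≤ 1 / 100) (hηk : η * √(Fintype.card k) * ‖M‖ ≤ 1 / 100)
    (hE : ‖U * Vᵀ - M‖ ≤ 2 * ‖M‖) (hD : ‖Uᵀ * U - Vᵀ * V‖ ≤ ‖M‖) :
    ‖U' * V'ᵀ - M‖ ≤ ‖U * Vᵀ - M‖ ∧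
      ‖U'ᵀ * U' - V'ᵀ * V'‖ ≤ ‖Uᵀ * U - Vᵀ * V‖ + 32 * η ^ 2 * √(Fintype.card k) * ‖M‖ ^ 3 := by
  obtain ⟨hU, hV⟩ := frobenius_norm_sq_factors_le hE hD
  subst hU' hV'
  constructor
  · refine frobenius_norm_gradient_step_residual_le M U V η hη hE hU hV ?_
    calc η * (2 * ‖M‖ + 4 * (4 * √(Fintype.card k) * ‖M‖) +
          2 * η ^ 2 * (2 * ‖M‖) ^ 2 * (4 * √(Fintype.card k) * ‖M‖))
        = 2 * (η * ‖M‖) + 16 * (η * √(Fintype.card k) * ‖M‖) +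
          32 * (η * ‖M‖) ^ 2 * (η * √(Fintype.card k) * ‖M‖) := by ring
      _ ≤ 2 * (1 / 100) + 16 * (1 / 100) + 32 * (1 / 100) ^ 2 * (1 / 100) := by gcongr
      _ ≤ 2 := by norm_num
  · have hEV : ‖(U * Vᵀ - M) * V‖ ^ 2 ≤ (2 * ‖M‖) ^ 2 * (4 * √(Fintype.card k) * ‖M‖) := by
      grw [frobenius_norm_mul, mul_pow, hE, hV]
    have hEU : ‖(U * Vᵀ - M)ᵀ * U‖ ^ 2 ≤ (2 * ‖M‖) ^ 2 * (4 * √(Fintype.card k) * ‖M‖) := by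
      grw [frobenius_norm_mul, frobenius_norm_transpose, mul_pow, hE, hU]
    grw [frobenius_norm_gradient_step_balance_le, hEV, hEU]
    exact le_of_eq (by ring)

theorem gradient_descent_invariants {M : Matrix m n ℝ} {U : ℕ → Matrix m k ℝ}
    {V : ℕ → Matrix n k ℝ} {η : ℕ → ℝ} {ε : ℝ} (hεM : ε ≤ ‖M‖)
    (hU0 : ‖U 0‖ ^ 2 ≤ ε) (hV0 : ‖V 0‖ ^ 2 ≤ ε) (hbal0 : ‖(U 0)ᵀ * U 0 - (V 0)ᵀ * V 0‖ ≤ ε / 2)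
    (hUstep : ∀ t, U (t + 1) = U t - η t • ((U t * (V t)ᵀ - M) * V t))
    (hVstep : ∀ t, V (t + 1) = V t - η t • ((U t * (V t)ᵀ - M)ᵀ * U t))
    (hη : ∀ t, 0 ≤ η t) (hηM : ∀ t, η t * ‖M‖ ≤ 1 / 100)
    (hηk : ∀ t, η t * √(Fintype.card k) * ‖M‖ ≤ 1 / 100)
    (hηsum : ∀ t, ∑ s ∈ Finset.range t, 32 * η s ^ 2 * √(Fintype.card k) * ‖M‖ ^ 3 ≤ ε / 2)
    (t : ℕ) :
    ‖U t * (V t)ᵀ - M‖ ≤ 2 * ‖M‖ ∧ ‖(U t)ᵀ * U t - (V t)ᵀ * V t‖ ≤ ε ∧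
      ‖U (t + 1) * (V (t + 1))ᵀ - M‖ ≤ ‖U t * (V t)ᵀ - M‖ := by
  have hE0 : ‖U 0 * (V 0)ᵀ - M‖ ≤ 2 * ‖M‖ := by
    have hUV : ‖U 0‖ * ‖V 0‖ ≤ ε := by nlinarith [sq_nonneg (‖U 0‖ - ‖V 0‖)]
    grw [norm_sub_le, frobenius_norm_mul, frobenius_norm_transpose, hUV, hεM]
    exact le_of_eq (by ring)
  have hinv : ∀ t, ‖U t * (V t)ᵀ - M‖ ≤ ‖U 0 * (V 0)ᵀ - M‖ ∧
      ‖(U t)ᵀ * U t - (V t)ᵀ * V t‖ ≤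
        ε / 2 + ∑ s ∈ Finset.range t, 32 * η s ^ 2 * √(Fintype.card k) * ‖M‖ ^ 3 := by
    intro t
    induction t with
    | zero => simpa using hbal0
    | succ t ih =>
      obtain ⟨hres, hbal⟩ := gradient_step_invariants (hUstep t) (hVstep t) (hη t) (hηM t)
        (hηk t) (ih.1.trans hE0) (by linarith [ih.2, hηsum t])
      refine ⟨hres.trans ih.1, ?_⟩
      rw [Finset.sum_range_succ]
      linarith [ih.2]
  have hE : ‖U t * (V t)ᵀ - M‖ ≤ 2 * ‖M‖ := (hinv t).1.trans hE0
  have hD : ‖(U t)ᵀ * U t - (V t)ᵀ * V t‖ ≤ ε := by linarith [(hinv t).2, hηsum t]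
  exact ⟨hE, hD, (gradient_step_invariants (hUstep t) (hVstep t) (hη t) (hηM t) (hηk t) hE
    (hD.trans hεM)).1⟩

theorem sum_range_inv_succ_sq_le_two (t : ℕ) : ∑ s ∈ Finset.range t, (((s : ℝ) + 1) ^ 2)⁻¹ ≤ 2 := by
  have h := sum_Ioo_inv_sq_le (α := ℝ) 0 (t + 1)
  rw [← Finset.Ico_add_one_left_eq_Ioo, ← Finset.sum_Ico_add', ← Finset.range_eq_Ico] at h
  simpa using h

theorem div_natCast_mul_le_self {ε x : ℝ} (hε : 0 ≤ ε) {r : ℕ} (hx : x ≤ r) : ε / r * x ≤ ε := by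
  rcases r.eq_zero_or_pos with rfl | hr
  · simpa using hε
  · rw [div_mul_eq_mul_div, div_le_iff₀ (by positivity)]
    exact mul_le_mul_of_nonneg_left hx hε

theorem step_size_constant_bounds {ε μ c : ℝ} {r : ℕ} (hε : 0 ≤ ε) (hμ : 0 < μ) (hεμ : ε ≤ μ)
    (hc : c = √(ε / r) / (100 * μ ^ ((3 : ℝ) / 2))) :
    0 ≤ c ∧ c * μ ≤ 1 / 100 ∧ c * √r * μ ≤ 1 / 100 ∧ 32 * c ^ 2 * √r * μ ^ 3 ≤ ε / 4 := by
  have hc0 : 0 ≤ c := by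
    rw [hc]
    positivity
  have hc2 : c ^ 2 = ε / r / (10000 * μ ^ 3) := by
    rw [hc, div_pow, Real.sq_sqrt (by positivity), mul_pow, ← Real.rpow_natCast (μ ^ _),
      ← Real.rpow_mul hμ.le]
    norm_num
  have hεr : ε / r * r ≤ ε := div_natCast_mul_le_self hε le_rfl
  have hεsr : ε / r * √r ≤ ε :=
    div_natCast_mul_le_self hε (Real.sqrt_le_self_iff.2 (by norm_cast; omega))
  refine ⟨hc0, ?_, ?_, ?_⟩
  · refine (sq_le_sq₀ (by positivity) (by norm_num)).1 ?_
    rw [mul_pow, hc2, div_mul_eq_mul_div, div_le_iff₀ (by positivity)]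
    nlinarith [mul_le_mul_of_nonneg_right ((div_nat_le_self_of_nonnneg hε r).trans hεμ)
      (sq_nonneg μ)]
  · refine (sq_le_sq₀ (by positivity) (by norm_num)).1 ?_
    rw [mul_pow, mul_pow, hc2, Real.sq_sqrt r.cast_nonneg, div_mul_eq_mul_div,
      div_mul_eq_mul_div, div_le_iff₀ (by positivity)]
    nlinarith [mul_le_mul_of_nonneg_right (hεr.trans hεμ) (sq_nonneg μ)]
  · have hexpand : 32 * (ε / r / (10000 * μ ^ 3)) * √r * μ ^ 3 = 32 / 10000 * (ε / r * √r) := by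
      field_simp
    rw [hc2, hexpand]
    linarith

theorem step_size_bounds {ε μ : ℝ} {r : ℕ} (hε : 0 ≤ ε) (hμ : 0 < μ) (hεμ : ε ≤ μ)
    {η : ℕ → ℝ} (hη : ∀ t : ℕ, η t = √(ε / r) / (100 * ((t : ℝ) + 1) * μ ^ ((3 : ℝ) / 2))) :
    (∀ t, 0 ≤ η t) ∧ (∀ t, η t * μ ≤ 1 / 100) ∧ (∀ t, η t * √r * μ ≤ 1 / 100) ∧
      ∀ t, ∑ s ∈ Finset.range t, 32 * η s ^ 2 * √r * μ ^ 3 ≤ ε / 2 := by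
  obtain ⟨hc, hcμ, hcr, hcsum⟩ := step_size_constant_bounds hε hμ hεμ rfl
  set c := √(ε / r) / (100 * μ ^ ((3 : ℝ) / 2))
  have hηc (t : ℕ) : η t = c / ((t : ℝ) + 1) := by
    rw [hη, div_div, mul_right_comm]
  have hηle (t : ℕ) : η t ≤ c := by
    rw [hηc]
    exact div_le_self hc (by linarith [t.cast_nonneg (α := ℝ)])
  refine ⟨fun t => ?_, fun t => ?_, fun t => ?_, fun t => ?_⟩
  · rw [hηc]
    positivity
  · grw [hηle t, hcμ]
  · grw [hηle t, hcr]
  · simp_rw [hηc, div_pow, div_eq_mul_inv _ (((_ : ℝ) + 1) ^ 2), ← mul_assoc]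
    calc ∑ s ∈ Finset.range t, 32 * c ^ 2 * (((s : ℝ) + 1) ^ 2)⁻¹ * √r * μ ^ 3
        = 32 * c ^ 2 * √r * μ ^ 3 * ∑ s ∈ Finset.range t, (((s : ℝ) + 1) ^ 2)⁻¹ := by
          rw [Finset.mul_sum]
          exact Finset.sum_congr rfl fun _ _ => by ring
      _ ≤ ε / 4 * 2 := by grw [hcsum, sum_range_inv_succ_sq_le_two t]
      _ = ε / 2 := by ring

end MatrixFactorization

end Frobenius

/-- Gradient descent on the unregularized objective `f(U,V) = ½‖UVᵀ − M*‖_F²`, started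
from a small balanced initialization and run with step sizes
`η_t = √(ε/r)/(100(t+1)‖M*‖_F^{3/2})`, keeps the factors balanced, decreases the
objective, and keeps the iterates bounded, for all iterations `t`. -/
theorem mf_gd_invariants {d₁ d₂ r : ℕ}
    (M : Matrix (Fin d₁) (Fin d₂) ℝ) (ε : ℝ)
    (hε0 : 0 < ε) (hεM : ε < frob M)
    (U : ℕ → Matrix (Fin d₁) (Fin r) ℝ) (V : ℕ → Matrix (Fin d₂) (Fin r) ℝ)
    (η : ℕ → ℝ)
    (hη : ∀ t : ℕ, η t = Real.sqrt (ε / r) / (100 * ((t : ℝ) + 1) * frob M ^ ((3 : ℝ) / 2)))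
    (hU0 : frob (U 0) ^ 2 ≤ ε) (hV0 : frob (V 0) ^ 2 ≤ ε)
    (hbal0 : frob ((U 0)ᵀ * U 0 - (V 0)ᵀ * V 0) ≤ ε / 2)
    (hUstep : ∀ t, U (t + 1) = U t - η t • ((U t * (V t)ᵀ - M) * V t))
    (hVstep : ∀ t, V (t + 1) = V t - η t • ((U t * (V t)ᵀ - M)ᵀ * U t)) :
    (∀ t, frob ((U t)ᵀ * U t - (V t)ᵀ * V t) ≤ ε) ∧
    (∀ t, mfObj M (U (t + 1)) (V (t + 1)) ≤ mfObj M (U t) (V t)) ∧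
    mfObj M (U 0) (V 0) ≤ 2 * frob M ^ 2 ∧
    (∀ t, frob (U t) ^ 2 ≤ 5 * Real.sqrt r * frob M ∧
          frob (V t) ^ 2 ≤ 5 * Real.sqrt r * frob M) := by
  open scoped Matrix.Norms.Frobenius in
  simp only [mfObj, frob_eq_norm] at hεM hη hU0 hV0 hbal0 ⊢
  have hM : 0 < ‖M‖ := hε0.trans hεM
  obtain ⟨hη0, hηM, hηr, hηsum⟩ := MatrixFactorization.step_size_bounds hε0.le hM hεM.le hη
  have hgd := MatrixFactorization.gradient_descent_invariants (k := Fin r) hεM.le hU0 hV0 hbal0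
    hUstep hVstep hη0 hηM (by simpa using hηr) (by simpa using hηsum)
  refine ⟨fun t => (hgd t).2.1, fun t => ?_, ?_, fun t => ?_⟩
  · gcongr
    exact (hgd t).2.2
  · nlinarith [(hgd 0).1, norm_nonneg (U 0 * (V 0)ᵀ - M)]
  · obtain ⟨hU, hV⟩ :=
      MatrixFactorization.frobenius_norm_sq_factors_le (hgd t).1 ((hgd t).2.1.trans hεM.le)
    simp only [Fintype.card_fin] at hU hV
    have : 0 ≤ √(r : ℝ) * ‖M‖ := by positivity
    constructor <;> linarith
end

section
/- Let M* ∈ ℝ^{d₁×d₂} have rank at most r, and let (U, V) with U ∈ ℝ^{d₁×r}, V ∈ ℝ^{d₂×r} be a stationary point of f, i.e. (UVᵀ − M*)V = 0 and (UVᵀ − M*)ᵀU = 0, satisfying ‖UᵀU − VᵀV‖_F ≤ ε. Then either ‖UVᵀ − M*‖_F ≤ ε, or (U, V) is a strict saddle point of f: there exist Δ_U ∈ ℝ^{d₁×r} and Δ_V ∈ ℝ^{d₂×r} such that the Hessian quadratic form of f at (U,V) in direction (Δ_U, Δ_V), namely 2⟨UVᵀ − M*, Δ_U Δ_Vᵀ⟩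 + ‖U Δ_Vᵀ + Δ_U Vᵀ‖_F², is strictly negative. -/
open Matrix

/-- Trace inner product `⟨A, B⟩ = tr(AᵀB)` of real matrices. -/
def minner {m n : Type*} [Fintype m] [Fintype n] (A B : Matrix m n ℝ) : ℝ :=
  ∑ i, ∑ j, A i j * B i j

/-!
Stationarity makes `UVᵀ` and the residual `R = UVᵀ − M*` orthogonal from both sides, so their
ranks add up to at most `rank M* ≤ r`; with Sylvester's inequality this gives
`rank U + rank V + rank R ≤ 2r`. Say `rank V ≤ rank U` (the other case is the transpose), so that
`k = dim ker V ≥ rank R / 2`. Averaging over an orthonormal basis of `ker V` yields a unit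
`a ∈ ker V` with `aᵀ(UᵀU − VᵀV)a ≤ ‖UᵀU − VᵀV‖_F / √k ≤ ε / √k`. For top singular vectors `x, z`
of `R`, with `xᵀRz = σ₁` and `‖R‖_F ≤ √(rank R) σ₁`, the direction `(−x aᵀ, z aᵀ)` has Hessian value
`−2σ₁ + ‖Ua‖² ≤ −2σ₁ + ε / √k`, which is negative as soon as `‖R‖_F > ε`.
-/

open Module

section Frobenius

variable {m n : Type*} [Fintype m] [Fintype n]

lemma frob_nonneg (A : Matrix m n ℝ) : 0 ≤ frob A :=
  Real.sqrt_nonneg _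

lemma frob_sq (A : Matrix m n ℝ) : frob A ^ 2 = ∑ i, ∑ j, A i j ^ 2 :=
  Real.sq_sqrt (by positivity)

lemma frob_neg (A : Matrix m n ℝ) : frob (-A) = frob A := by
  simp [frob]

lemma frob_transpose (A : Matrix m n ℝ) : frob Aᵀ = frob A := by
  rw [frob, frob, Finset.sum_comm]
  rfl

lemma minner_self (A : Matrix m n ℝ) : minner A A = frob A ^ 2 := by
  simp only [minner, frob_sq, ← sq]

lemma minner_transpose (A B : Matrix m n ℝ) : minner Aᵀ Bᵀ = minner A B :=
  Finset.sum_comm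

lemma minner_eq_trace (A B : Matrix m n ℝ) : minner A B = (Aᵀ * B).trace := by
  simp only [minner, trace, diag, mul_apply, transpose_apply]
  exact Finset.sum_comm

lemma frob_sq_eq_trace (A : Matrix m n ℝ) : frob A ^ 2 = (Aᵀ * A).trace := by
  rw [← minner_self, minner_eq_trace]

lemma minner_le_frob_mul_frob (A B : Matrix m n ℝ) : minner A B ≤ frob A * frob B := by
  simpa [minner, frob, Fintype.sum_prod_type] using
    Real.sum_mul_le_sqrt_mul_sqrt Finset.univ (fun p : m × n ↦ A p.1 p.2) (fun p ↦ B p.1 p.2)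

lemma minner_vecMulVec (A : Matrix m n ℝ) (x : m → ℝ) (z : n → ℝ) :
    minner A (vecMulVec x z) = x ⬝ᵥ (A *ᵥ z) := by
  simp only [minner, vecMulVec_apply, dotProduct, mulVec, Finset.mul_sum]
  exact Fintype.sum_congr _ _ fun i ↦ Fintype.sum_congr _ _ fun j ↦ by ring

lemma frob_vecMulVec_sq (x : m → ℝ) (z : n → ℝ) :
    frob (vecMulVec x z) ^ 2 = (x ⬝ᵥ x) * (z ⬝ᵥ z) := by
  rw [frob_sq, dotProduct, dotProduct, Finset.sum_mul_sum]
  simp only [vecMulVec_apply, sq, mul_mul_mul_comm]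

lemma mulVec_dotProduct_mulVec_self (A : Matrix m n ℝ) (a : n → ℝ) :
    (A *ᵥ a) ⬝ᵥ (A *ᵥ a) = a ⬝ᵥ ((Aᵀ * A) *ᵥ a) := by
  rw [dotProduct_mulVec, ← mulVec_transpose, mulVec_mulVec, dotProduct_comm]

lemma frob_pos {A : Matrix m n ℝ} (hA : A ≠ 0) : 0 < frob A := by
  have htrace : (Aᴴ * A).trace ≠ 0 := mt trace_conjTranspose_mul_self_eq_zero_iff.mp hA
  rw [conjTranspose_eq_transpose_of_trivial, ← frob_sq_eq_trace] at htrace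
  exact (frob_nonneg A).lt_of_ne' (pow_ne_zero_iff two_ne_zero |>.mp htrace)

end Frobenius

namespace Matrix

lemma rank_add_rank_le_card_add_rank_mul {K l m n : Type*} [Field K] [Fintype m]
    [Fintype n] (A : Matrix l m K) (B : Matrix m n K) :
    A.rank + B.rank ≤ Fintype.card m + (A * B).rank := by
  set f := A.mulVecLin
  set g := B.mulVecLin
  set h := f.domRestrict (LinearMap.range g)
  have hAB : (A * B).rank = finrank K (LinearMap.range h) := by
    rw [Matrix.rank, mulVecLin_mul, LinearMap.range_comp, LinearMap.range_domRestrict]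
  have hker : finrank K (LinearMap.ker h) ≤ finrank K (LinearMap.ker f) := by
    rw [← Submodule.finrank_map_subtype_eq (LinearMap.range g) (LinearMap.ker h)]
    refine Submodule.finrank_mono ?_
    rintro _ ⟨y, hy, rfl⟩
    exact hy
  have hA : A.rank + finrank K (LinearMap.ker f) = Fintype.card m := by
    rw [Matrix.rank, LinearMap.finrank_range_add_finrank_ker, finrank_fintype_fun_eq_card]
  have hB : B.rank = finrank K (LinearMap.range h) + finrank K (LinearMap.ker h) :=
    (LinearMap.finrank_range_add_finrank_ker h).symm
  omega

variable {m n : Type*} [Fintype m] [Fintype n]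

lemma rank_neg (A : Matrix m n ℝ) : (-A).rank = A.rank := by
  rw [← rank_transpose_mul_self, transpose_neg, Matrix.neg_mul, Matrix.mul_neg, neg_neg,
    rank_transpose_mul_self]

lemma range_mulVecLin_mul_transpose (A : Matrix m n ℝ) :
    LinearMap.range (A * Aᵀ).mulVecLin = LinearMap.range A.mulVecLin := by
  refine Submodule.eq_of_le_of_finrank_le ?_ (rank_self_mul_transpose A).ge
  rw [mulVecLin_mul]
  exact LinearMap.range_comp_le_range _ _

lemma range_mulVecLin_le_range_add {A B : Matrix m n ℝ} (h : B * Aᵀ = 0) :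
    LinearMap.range A.mulVecLin ≤ LinearMap.range (A + B).mulVecLin := by
  have hAA : (A + B) * Aᵀ = A * Aᵀ := by rw [Matrix.add_mul, h, add_zero]
  rw [← range_mulVecLin_mul_transpose, ← hAA, mulVecLin_mul]
  exact LinearMap.range_comp_le_range _ _

lemma disjoint_range_mulVecLin {A B : Matrix m n ℝ} (h : Aᵀ * B = 0) :
    Disjoint (LinearMap.range A.mulVecLin) (LinearMap.range B.mulVecLin) := by
  rw [Submodule.disjoint_def]
  rintro _ ⟨u, rfl⟩ ⟨v, hv⟩
  simp only [mulVecLin_apply] at hv ⊢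
  have : (A *ᵥ u) ⬝ᵥ (A *ᵥ u) = 0 := by
    nth_rewrite 2 [← hv]
    rw [dotProduct_mulVec, ← vecMul_transpose, vecMul_vecMul, h, vecMul_zero, zero_dotProduct]
  exact dotProduct_self_eq_zero.mp this

lemma rank_add_rank_le_rank_add {A B : Matrix m n ℝ} (h₁ : Aᵀ * B = 0) (h₂ : A * Bᵀ = 0) :
    A.rank + B.rank ≤ (A + B).rank := by
  have hA : LinearMap.range A.mulVecLin ≤ LinearMap.range (A + B).mulVecLin :=
    range_mulVecLin_le_range_add <| by
      rw [← transpose_transpose B, ← transpose_mul, h₂, transpose_zero]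
  have hB : LinearMap.range B.mulVecLin ≤ LinearMap.range (A + B).mulVecLin :=
    add_comm A B ▸ range_mulVecLin_le_range_add h₂
  have hsup := Submodule.finrank_sup_add_finrank_inf_eq
    (LinearMap.range A.mulVecLin) (LinearMap.range B.mulVecLin)
  rw [(disjoint_range_mulVecLin h₁).eq_bot, finrank_bot, add_zero] at hsup
  rw [Matrix.rank, Matrix.rank, Matrix.rank, ← hsup]
  exact Submodule.finrank_mono (sup_le hA hB)

end Matrix

lemma rank_add_rank_add_rank_residual_le {m₁ m₂ n : Type*} [Fintype m₁] [Fintype m₂]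
    [Fintype n] (M : Matrix m₁ m₂ ℝ) (U : Matrix m₁ n ℝ) (V : Matrix m₂ n ℝ)
    (h₁ : (U * Vᵀ - M) * V = 0) (h₂ : (U * Vᵀ - M)ᵀ * U = 0) :
    U.rank + V.rank + (U * Vᵀ - M).rank ≤ Fintype.card n + M.rank := by
  set R := U * Vᵀ - M
  have hsylvester := U.rank_add_rank_le_card_add_rank_mul Vᵀ
  rw [rank_transpose] at hsylvester
  have hUR : Uᵀ * R = 0 := by simpa using congrArg transpose h₂
  have horth : (U * Vᵀ).rank + (-R).rank ≤ (U * Vᵀ + -R).rank := by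
    refine rank_add_rank_le_rank_add ?_ ?_
    · rw [transpose_mul, transpose_transpose, Matrix.mul_neg, Matrix.mul_assoc, hUR,
        Matrix.mul_zero, neg_zero]
    · rw [transpose_neg, Matrix.mul_neg, Matrix.mul_assoc, ← transpose_mul, h₁, transpose_zero,
        Matrix.mul_zero, neg_zero]
  rw [rank_neg, ← sub_eq_add_neg, sub_sub_cancel] at horth
  omega

lemma Matrix.IsHermitian.trace_le_rank_mul {n : Type*} [Fintype n] [DecidableEq n]
    {A : Matrix n n ℝ} (hA : A.IsHermitian) {c : ℝ} (hc : ∀ i, hA.eigenvalues i ≤ c) :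
    A.trace ≤ A.rank * c := by
  rw [hA.trace_eq_sum_eigenvalues, hA.rank_eq_card_non_zero_eigs, Fintype.card_subtype,
    ← Finset.sum_filter_ne_zero, ← nsmul_eq_mul]
  exact Finset.sum_le_card_nsmul _ _ _ fun i _ ↦ hc i

lemma exists_singular_vectors_frob_sq_le {m n : Type*} [Fintype m] [Fintype n]
    (R : Matrix m n ℝ) (hR : R ≠ 0) :
    ∃ σ > 0, ∃ (x : m → ℝ) (z : n → ℝ), x ⬝ᵥ x = 1 ∧ z ⬝ᵥ z = 1 ∧
      x ⬝ᵥ (R *ᵥ z) = σ ∧ frob R ^ 2 ≤ R.rank * σ ^ 2 := by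
  classical
  have hG : (Rᵀ * R).IsHermitian := by
    simpa only [conjTranspose_eq_transpose_of_trivial] using isHermitian_conjTranspose_mul_self R
  obtain ⟨-, j, -⟩ : ∃ i j, R i j ≠ 0 := by
    by_contra! h
    exact hR (ext h)
  have : Nonempty n := ⟨j⟩
  obtain ⟨i₀, hi₀⟩ := Finite.exists_max hG.eigenvalues
  set μ := hG.eigenvalues i₀
  set z : n → ℝ := WithLp.ofLp (hG.eigenvectorBasis i₀)
  have hz : z ⬝ᵥ z = 1 := by
    have := orthonormal_iff_ite.mp hG.eigenvectorBasis.orthonormal i₀ i₀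
    rwa [EuclideanSpace.inner_eq_star_dotProduct, star_trivial, if_pos rfl] at this
  have hRz : (R *ᵥ z) ⬝ᵥ (R *ᵥ z) = μ := by
    rw [mulVec_dotProduct_mulVec_self, hG.mulVec_eigenvectorBasis, dotProduct_smul, hz,
      smul_eq_mul, mul_one]
  have hbound : frob R ^ 2 ≤ R.rank * μ := by
    rw [frob_sq_eq_trace, ← rank_transpose_mul_self R]
    exact hG.trace_le_rank_mul hi₀
  have hμ : 0 < μ := by
    by_contra! hμ
    have := hbound.trans (mul_nonpos_of_nonneg_of_nonpos (Nat.cast_nonneg _) hμ)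
    nlinarith [frob_pos hR]
  have hσ : 0 < √μ := Real.sqrt_pos.mpr hμ
  refine ⟨√μ, hσ, (√μ)⁻¹ • (R *ᵥ z), z, ?_, hz, ?_, ?_⟩
  · rw [smul_dotProduct, dotProduct_smul, hRz, smul_eq_mul, smul_eq_mul]
    field_simp
    exact (Real.sq_sqrt hμ.le).symm
  · rw [smul_dotProduct, hRz, smul_eq_mul]
    field_simp
    exact (Real.sq_sqrt hμ.le).symm
  · rwa [Real.sq_sqrt hμ.le]

section KernelDirection

variable {n : Type*} [Fintype n]

lemma sum_dotProduct_mulVec_le_of_mul_transpose_eq_one {ι : Type*} [Fintype ι] [DecidableEq ι]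
    (B : Matrix n n ℝ) (Q : Matrix ι n ℝ) (hQ : Q * Qᵀ = 1) :
    ∑ i, Q i ⬝ᵥ (B *ᵥ Q i) ≤ frob B * √(Fintype.card ι) := by
  have hsum : ∑ i, Q i ⬝ᵥ (B *ᵥ Q i) = minner Bᵀ (Qᵀ * Q) := by
    rw [minner_eq_trace, transpose_transpose, ← Matrix.mul_assoc, trace_mul_comm]
    simp only [trace, diag, mul_apply, dotProduct, mulVec, transpose_apply, Finset.mul_sum]
  have hproj : frob (Qᵀ * Q) ^ 2 = Fintype.card ι := by
    rw [frob_sq_eq_trace, transpose_mul, transpose_transpose, Matrix.mul_assoc,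
      ← Matrix.mul_assoc Q, hQ, Matrix.one_mul, trace_mul_comm, hQ, trace_one]
  calc ∑ i, Q i ⬝ᵥ (B *ᵥ Q i) = minner Bᵀ (Qᵀ * Q) := hsum
    _ ≤ frob Bᵀ * frob (Qᵀ * Q) := minner_le_frob_mul_frob _ _
    _ = frob B * √(Fintype.card ι) := by
      rw [frob_transpose, ← hproj, Real.sqrt_sq (frob_nonneg _)]

lemma exists_unit_mulVec_eq_zero_dotProduct_mulVec_le {m : Type*} (W : Matrix m n ℝ)
    (B : Matrix n n ℝ) (hW : W.rank < Fintype.card n) :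
    ∃ a : n → ℝ, a ⬝ᵥ a = 1 ∧ W *ᵥ a = 0 ∧
      a ⬝ᵥ (B *ᵥ a) ≤ frob B / √(Fintype.card n - W.rank : ℕ) := by
  set T := W.mulVecLin ∘ₗ (WithLp.linearEquiv 2 ℝ (n → ℝ)).toLinearMap
  set N := finrank ℝ (LinearMap.ker T)
  have hdim : N = Fintype.card n - W.rank := by
    have hrange : LinearMap.range T = LinearMap.range W.mulVecLin := by
      rw [LinearMap.range_comp, LinearEquiv.range, Submodule.map_top]
    have := LinearMap.finrank_range_add_finrank_ker T
    rw [hrange, finrank_euclideanSpace] at this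
    rw [Matrix.rank]
    omega
  let b := stdOrthonormalBasis ℝ (LinearMap.ker T)
  let Q : Matrix (Fin N) n ℝ := fun i ↦ WithLp.ofLp (b i : EuclideanSpace ℝ n)
  have hQ : Q * Qᵀ = 1 := by
    ext i j
    have := orthonormal_iff_ite.mp b.orthonormal i j
    rw [Submodule.coe_inner, EuclideanSpace.inner_eq_star_dotProduct, star_trivial,
      dotProduct_comm] at this
    rw [one_apply, ← this]
    rfl
  have hker (i) : W *ᵥ Q i = 0 := LinearMap.mem_ker.mp (b i).2
  have hconst : frob B * √(Fintype.card (Fin N)) = ∑ _i : Fin N, frob B / √N := by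
    have hsqrt : 0 < √(N : ℝ) := Real.sqrt_pos.mpr (by norm_cast; omega)
    rw [Finset.sum_const, Finset.card_univ, Fintype.card_fin, nsmul_eq_mul]
    field_simp
    rw [Real.sq_sqrt (Nat.cast_nonneg N)]
  have : Nonempty (Fin N) := ⟨⟨0, by omega⟩⟩
  obtain ⟨i, -, hi⟩ := Finset.exists_le_of_sum_le Finset.univ_nonempty
    ((sum_dotProduct_mulVec_le_of_mul_transpose_eq_one B Q hQ).trans hconst.le)
  exact ⟨Q i, (congrFun (congrFun hQ i) i).trans (one_apply_eq i), hker i, hdim ▸ hi⟩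

end KernelDirection

section HessianForm

variable {m₁ m₂ n : Type*} [Fintype m₁] [Fintype m₂] [Fintype n]

/-- The Hessian quadratic form of `f` at `(U, V)` in direction `(DU, DV)`, in terms of the residual
`R = UVᵀ − M*`. -/
noncomputable def hessianForm (R : Matrix m₁ m₂ ℝ) (U : Matrix m₁ n ℝ) (V : Matrix m₂ n ℝ)
    (DU : Matrix m₁ n ℝ) (DV : Matrix m₂ n ℝ) : ℝ :=
  2 * minner R (DU * DVᵀ) + frob (U * DVᵀ + DU * Vᵀ) ^ 2

lemma hessianForm_transpose (R : Matrix m₁ m₂ ℝ) (U : Matrix m₁ n ℝ) (V : Matrix m₂ n ℝ)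
    (DU : Matrix m₁ n ℝ) (DV : Matrix m₂ n ℝ) :
    hessianForm Rᵀ V U DV DU = hessianForm R U V DU DV := by
  have hsum : V * DUᵀ + DV * Uᵀ = (U * DVᵀ + DU * Vᵀ)ᵀ := by
    rw [transpose_add, transpose_mul, transpose_mul, transpose_transpose, transpose_transpose,
      add_comm]
  rw [hessianForm, hessianForm, hsum, frob_transpose, ← minner_transpose R, transpose_mul,
    transpose_transpose]

lemma hessianForm_vecMulVec (R : Matrix m₁ m₂ ℝ) (U : Matrix m₁ n ℝ) (V : Matrix m₂ n ℝ)
    (x : m₁ → ℝ) (z : m₂ → ℝ) (a : n → ℝ) (ha : a ⬝ᵥ a = 1) (hz : z ⬝ᵥ z = 1)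
    (hVa : V *ᵥ a = 0) :
    hessianForm R U V (vecMulVec (-x) a) (vecMulVec z a) =
      -2 * (x ⬝ᵥ (R *ᵥ z)) + a ⬝ᵥ ((Uᵀ * U - Vᵀ * V) *ᵥ a) := by
  have hprod : vecMulVec (-x) a * (vecMulVec z a)ᵀ = vecMulVec (-x) z := by
    rw [transpose_vecMulVec, vecMulVec_mul_vecMulVec, ha, one_smul]
  have hsum : U * (vecMulVec z a)ᵀ + vecMulVec (-x) a * Vᵀ = vecMulVec (U *ᵥ a) z := by
    rw [transpose_vecMulVec, mul_vecMulVec, vecMulVec_mul, vecMul_transpose, hVa, add_eq_left]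
    ext
    simp [vecMulVec_apply]
  have hVVa : (Vᵀ * V) *ᵥ a = 0 := by rw [← mulVec_mulVec, hVa, mulVec_zero]
  rw [hessianForm, hprod, hsum, minner_vecMulVec, frob_vecMulVec_sq, hz, mul_one,
    mulVec_dotProduct_mulVec_self, sub_mulVec, hVVa, sub_zero, neg_dotProduct]
  ring

end HessianForm

lemma exists_hessianForm_neg {m₁ m₂ n : Type*} [Fintype m₁] [Fintype m₂] [Fintype n]
    (R : Matrix m₁ m₂ ℝ) (U : Matrix m₁ n ℝ) (V : Matrix m₂ n ℝ) {ε : ℝ}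
    (hbal : frob (Uᵀ * U - Vᵀ * V) ≤ ε) (hR : ε < frob R)
    (hrank : R.rank ≤ 2 * (Fintype.card n - V.rank)) :
    ∃ DU DV, hessianForm R U V DU DV < 0 := by
  have hR0 : R ≠ 0 := by
    rintro rfl
    have : frob (0 : Matrix m₁ m₂ ℝ) = 0 := by simp [frob]
    linarith [frob_nonneg (Uᵀ * U - Vᵀ * V)]
  obtain ⟨σ, hσ, x, z, -, hz, hxRz, hfrob⟩ := exists_singular_vectors_frob_sq_le R hR0
  set k := Fintype.card n - V.rank
  have hk : 0 < k := by
    by_contra! hk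
    have : R.rank = 0 := by omega
    rw [this, Nat.cast_zero, zero_mul] at hfrob
    linarith [frob_pos hR0, pow_pos (frob_pos hR0) 2]
  obtain ⟨a, ha, hVa, haB⟩ :=
    exists_unit_mulVec_eq_zero_dotProduct_mulVec_le V (Uᵀ * U - Vᵀ * V) (by omega)
  refine ⟨vecMulVec (-x) a, vecMulVec z a, ?_⟩
  rw [hessianForm_vecMulVec R U V x z a ha hz hVa, hxRz]
  have hsqrt : 0 < √(k : ℝ) := Real.sqrt_pos.mpr (Nat.cast_pos.mpr hk)
  have hεσ : ε < 2 * σ * √k := by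
    refine hR.trans (lt_of_pow_lt_pow_left₀ 2 (by positivity) ?_)
    calc frob R ^ 2 ≤ R.rank * σ ^ 2 := hfrob
      _ ≤ 2 * k * σ ^ 2 := by gcongr; exact_mod_cast hrank
      _ < (2 * σ * √k) ^ 2 := by
        rw [mul_pow, mul_pow, Real.sq_sqrt (Nat.cast_nonneg k)]
        nlinarith [mul_pos (pow_pos hσ 2) (Nat.cast_pos.mpr hk : (0 : ℝ) < k)]
  have : frob (Uᵀ * U - Vᵀ * V) / √k < 2 * σ := by
    rw [div_lt_iff₀ hsqrt]
    linarith
  linarith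

/-- A stationary point `(U,V)` of `f(U,V) = ½‖UVᵀ − M*‖_F²` with
`‖UᵀU − VᵀV‖_F ≤ ε` is either `ε`-close to a global minimum
(`‖UVᵀ − M*‖_F ≤ ε`) or a strict saddle point: some direction `(Δ_U, Δ_V)`
makes the Hessian quadratic form strictly negative. -/
theorem stationary_balanced_close_or_strict_saddle {d₁ d₂ r : ℕ}
    (M : Matrix (Fin d₁) (Fin d₂) ℝ) (hrank : M.rank ≤ r)
    (U : Matrix (Fin d₁) (Fin r) ℝ) (V : Matrix (Fin d₂) (Fin r) ℝ) (ε : ℝ)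
    (hstat₁ : (U * Vᵀ - M) * V = 0) (hstat₂ : (U * Vᵀ - M)ᵀ * U = 0)
    (hbal : frob (Uᵀ * U - Vᵀ * V) ≤ ε) :
    frob (U * Vᵀ - M) ≤ ε ∨
      ∃ (DU : Matrix (Fin d₁) (Fin r) ℝ) (DV : Matrix (Fin d₂) (Fin r) ℝ),
        2 * minner (U * Vᵀ - M) (DU * DVᵀ) + frob (U * DVᵀ + DU * Vᵀ) ^ 2 < 0 := by
  refine or_iff_not_imp_left.mpr fun hR ↦ ?_
  rw [not_le] at hR
  have hranks := rank_add_rank_add_rank_residual_le M U V hstat₁ hstat₂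
  rw [Fintype.card_fin] at hranks
  rcases le_total V.rank U.rank with hVU | hUV
  · exact exists_hessianForm_neg _ U V hbal hR (by rw [Fintype.card_fin]; omega)
  · obtain ⟨DV, DU, h⟩ := exists_hessianForm_neg (U * Vᵀ - M)ᵀ V U (ε := ε)
      (by rwa [← neg_sub, frob_neg]) (by rwa [frob_transpose])
      (by rw [rank_transpose, Fintype.card_fin]; omega)
    exact ⟨DU, DV, by rwa [hessianForm_transpose] at h⟩
end

section
/- Let u*, v* be unit vectors in ℝ^{d₁}, ℝ^{d₂}, σ₁ > 0, M* = σ₁ u* v*ᵀ, and η ∈ ℝ. Given u ∈ ℝ^{d₁}, v ∈ ℝ^{d₂}, define the gradient descent step u₊ = u − η(uvᵀ − M*)v and v₊ = v − η(vuᵀ − M*ᵀ)u. Then with α = uᵀu*, β = vᵀv*, α_⊥ = ‖u − (uᵀu*)u*‖₂, β_⊥ = ‖v − (vᵀv*)v*‖₂ (and analogously α₊, β₊, α₊,⊥, β₊,⊥ defined from u₊, v₊), the following recursions hold: α₊ = (1 − η(β² + β_⊥²))α + ησ₁β, β₊ = (1 − η(α² + α_⊥²))β + ησ₁α, α₊,⊥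 = (1 − η(β² + β_⊥²))·α_⊥ whenever 1 − η(β² + β_⊥²) ≥ 0, and β₊,⊥ = (1 − η(α² + α_⊥²))·β_⊥ whenever 1 − η(α² + α_⊥²) ≥ 0. -/
/-!
A gradient step replaces `u` by `(1 - η‖v‖²) u + ησ₁β u*`, a combination of `u` and the unit
vector `u*`. It sends the `u*`-component `α` to `(1 - η‖v‖²) α + ησ₁β` and scales the part of `u`
orthogonal to `u*` by `1 - η‖v‖²`; Pythagoras gives `‖v‖² = β² + β_⊥²`.
-/

open Finset

section
variable {ι : Type*} [Fintype ι]

theorem sum_sq_eq_sq_add_sum_sq_sub_proj {w : ι → ℝ} (hw : ∑ i, w i ^ 2 = 1) (x : ι → ℝ) :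
    ∑ i, x i ^ 2 = (∑ i, x i * w i) ^ 2 + ∑ i, (x i - (∑ i, x i * w i) * w i) ^ 2 := by
  generalize ha : ∑ i, x i * w i = a
  have expand : ∑ i, (x i - a * w i) ^ 2 =
      ∑ i, x i ^ 2 - 2 * a * ∑ i, x i * w i + a ^ 2 * ∑ i, w i ^ 2 := by
    rw [mul_sum, mul_sum, ← sum_sub_distrib, ← sum_add_distrib]
    exact sum_congr rfl fun i _ => by ring
  rw [expand, hw, ha]
  ring

theorem sum_mul_eq_of_eq_mul_add_mul {w x y : ι → ℝ} (hw : ∑ i, w i ^ 2 = 1) {c b : ℝ}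
    (hy : ∀ i, y i = c * x i + b * w i) :
    ∑ i, y i * w i = c * ∑ i, x i * w i + b :=
  calc ∑ i, y i * w i = ∑ i, (c * (x i * w i) + b * w i ^ 2) :=
        sum_congr rfl fun i _ => by rw [hy]; ring
    _ = c * ∑ i, x i * w i + b * ∑ i, w i ^ 2 := by rw [sum_add_distrib, mul_sum, mul_sum]
    _ = c * ∑ i, x i * w i + b := by rw [hw, mul_one]

theorem sqrt_sum_sq_sub_proj_of_eq_mul_add_mul {w x y : ι → ℝ} (hw : ∑ i, w i ^ 2 = 1)
    {c b : ℝ} (hy : ∀ i, y i = c * x i + b * w i) :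
    √(∑ i, (y i - (∑ i, y i * w i) * w i) ^ 2) =
      |c| * √(∑ i, (x i - (∑ i, x i * w i) * w i) ^ 2) := by
  have scaled : ∑ i, (y i - (∑ i, y i * w i) * w i) ^ 2 =
      c ^ 2 * ∑ i, (x i - (∑ i, x i * w i) * w i) ^ 2 := by
    rw [sum_mul_eq_of_eq_mul_add_mul hw hy]
    generalize ∑ i, x i * w i = a
    rw [mul_sum]
    exact sum_congr rfl fun i _ => by rw [hy i]; ring
  rw [scaled, Real.sqrt_mul (sq_nonneg c), Real.sqrt_sq_eq_abs]

end

theorem rank1_gd_step_eq {ι κ : Type*} [Fintype κ] {us u up : ι → ℝ} {vs v : κ → ℝ} {σ₁ η : ℝ}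
    (hup : ∀ i, up i = u i - η * ∑ j, (u i * v j - σ₁ * us i * vs j) * v j) (i : ι) :
    up i = (1 - η * ∑ j, v j ^ 2) * u i + η * σ₁ * (∑ j, v j * vs j) * us i := by
  have grad : ∑ j, (u i * v j - σ₁ * us i * vs j) * v j =
      u i * ∑ j, v j ^ 2 - σ₁ * us i * ∑ j, v j * vs j := by
    rw [mul_sum, mul_sum, ← sum_sub_distrib]
    exact sum_congr rfl fun j _ => by ring
  rw [hup, grad]
  ring

theorem rank1_gd_coordinate_dynamics_general {d₁ d₂ : ℕ}
    (us : Fin d₁ → ℝ) (vs : Fin d₂ → ℝ)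
    (hus : ∑ i, us i ^ 2 = 1) (hvs : ∑ j, vs j ^ 2 = 1)
    (σ₁ : ℝ) (η : ℝ)
    (u : Fin d₁ → ℝ) (v : Fin d₂ → ℝ) (up : Fin d₁ → ℝ) (vp : Fin d₂ → ℝ)
    (hup : ∀ i, up i = u i - η * ∑ j, (u i * v j - σ₁ * us i * vs j) * v j)
    (hvp : ∀ j, vp j = v j - η * ∑ i, (v j * u i - σ₁ * vs j * us i) * u i)
    (α β αp βp α' β' αp' βp' : ℝ)
    (hα : α = ∑ i, u i * us i) (hβ : β = ∑ j, v j * vs j)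
    (hαp : αp = ∑ i, up i * us i) (hβp : βp = ∑ j, vp j * vs j)
    (hα' : α' = Real.sqrt (∑ i, (u i - α * us i) ^ 2))
    (hβ' : β' = Real.sqrt (∑ j, (v j - β * vs j) ^ 2))
    (hαp' : αp' = Real.sqrt (∑ i, (up i - αp * us i) ^ 2))
    (hβp' : βp' = Real.sqrt (∑ j, (vp j - βp * vs j) ^ 2)) :
    αp = (1 - η * (β ^ 2 + β' ^ 2)) * α + η * σ₁ * β ∧
    βp = (1 - η * (α ^ 2 + α' ^ 2)) * β + η * σ₁ * α ∧
    (0 ≤ 1 - η * (β ^ 2 + β' ^ 2) → αp' = (1 - η * (β ^ 2 + β' ^ 2)) * α') ∧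
    (0 ≤ 1 - η * (α ^ 2 + α' ^ 2) → βp' = (1 - η * (α ^ 2 + α' ^ 2)) * β') := by
  have hu := sum_sq_eq_sq_add_sum_sq_sub_proj hus u
  have hv := sum_sq_eq_sq_add_sum_sq_sub_proj hvs v
  have hup' := rank1_gd_step_eq hup
  have hvp' := rank1_gd_step_eq hvp
  subst hα hβ hαp hβp hα' hβ' hαp' hβp'
  rw [Real.sq_sqrt (by positivity), Real.sq_sqrt (by positivity), ← hu, ← hv]
  refine ⟨?_, ?_, fun hc => ?_, fun hc => ?_⟩
  · exact sum_mul_eq_of_eq_mul_add_mul hus hup'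
  · exact sum_mul_eq_of_eq_mul_add_mul hvs hvp'
  · rw [sqrt_sum_sq_sub_proj_of_eq_mul_add_mul hus hup', abs_of_nonneg hc]
  · rw [sqrt_sum_sq_sub_proj_of_eq_mul_add_mul hvs hvp', abs_of_nonneg hc]

/-- One gradient descent step for rank-1 matrix factorization `½‖uvᵀ − σ₁u*v*ᵀ‖_F²`,
written in the coordinates `α = uᵀu*`, `β = vᵀv*`,
`α_⊥ = ‖(I − u*u*ᵀ)u‖₂`, `β_⊥ = ‖(I − v*v*ᵀ)v‖₂`: the explicit recursions for the
signal components and the complement-space magnitudes hold (the latter whenever the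
corresponding contraction factor is nonnegative). -/
theorem rank1_gd_coordinate_dynamics {d₁ d₂ : ℕ}
    (us : Fin d₁ → ℝ) (vs : Fin d₂ → ℝ)
    (hus : ∑ i, us i ^ 2 = 1) (hvs : ∑ j, vs j ^ 2 = 1)
    (σ₁ : ℝ) (hσ : 0 < σ₁) (η : ℝ)
    (u : Fin d₁ → ℝ) (v : Fin d₂ → ℝ) (up : Fin d₁ → ℝ) (vp : Fin d₂ → ℝ)
    (hup : ∀ i, up i = u i - η * ∑ j, (u i * v j - σ₁ * us i * vs j) * v j)
    (hvp : ∀ j, vp j = v j - η * ∑ i, (v j * u i - σ₁ * vs j * us i) * u i)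
    (α β αp βp α' β' αp' βp' : ℝ)
    (hα : α = ∑ i, u i * us i) (hβ : β = ∑ j, v j * vs j)
    (hαp : αp = ∑ i, up i * us i) (hβp : βp = ∑ j, vp j * vs j)
    (hα' : α' = Real.sqrt (∑ i, (u i - α * us i) ^ 2))
    (hβ' : β' = Real.sqrt (∑ j, (v j - β * vs j) ^ 2))
    (hαp' : αp' = Real.sqrt (∑ i, (up i - αp * us i) ^ 2))
    (hβp' : βp' = Real.sqrt (∑ j, (vp j - βp * vs j) ^ 2)) :
    αp = (1 - η * (β ^ 2 + β' ^ 2)) * α + η * σ₁ * β ∧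
    βp = (1 - η * (α ^ 2 + α' ^ 2)) * β + η * σ₁ * α ∧
    (0 ≤ 1 - η * (β ^ 2 + β' ^ 2) → αp' = (1 - η * (β ^ 2 + β' ^ 2)) * α') ∧
    (0 ≤ 1 - η * (α ^ 2 + α' ^ 2) → βp' = (1 - η * (α ^ 2 + α' ^ 2)) * β') :=
  rank1_gd_coordinate_dynamics_general us vs hus hvs σ₁ η u v up vp hup hvp α β αp βp α' β' αp' βp'
    hα hβ hαp hβp hα' hβ' hαp' hβp'
end

section
/- Let σ₁ > 0, 0 < η ≤ 1/σ₁, and let α, β, α_⊥, β_⊥ be reals with α > 0, β > 0, α² + β² ≤ σ₁/2, and ξ := α_⊥² + β_⊥² ≤ σ₁/6. Define α₊ = (1 − η(β² + β_⊥²))α + ησ₁β and β₊ = (1 − η(α² + α_⊥²))β + ησ₁α. Then (1 + ησ₁/3)·(α + β) ≤ α₊ + β₊ ≤ (1 + ησ₁)·(α + β). (This is the exponential growth of the signal strength during the saddle-escaping stage of gradient descent for rank-1 matrix factorization.) -/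
/-! The sum `α₊ + β₊` equals `(1 + ησ₁)(α + β)` minus the damping term
`η((β² + β_⊥²)α + (α² + α_⊥²)β)`. The damping is nonnegative, which gives the upper bound, and
since both `β² + β_⊥²` and `α² + α_⊥²` are at most `σ₁/2 + σ₁/6 = 2σ₁/3`, it is at most
`(2ησ₁/3)(α + β)`, which gives the lower bound. -/

namespace Rank1Factorization

theorem step_sum_eq (σ₁ η α β α' β' : ℝ) :
    ((1 - η * (β ^ 2 + β' ^ 2)) * α + η * σ₁ * β) + ((1 - η * (α ^ 2 + α' ^ 2)) * β + η * σ₁ * α)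
      = (1 + η * σ₁) * (α + β) - η * ((β ^ 2 + β' ^ 2) * α + (α ^ 2 + α' ^ 2) * β) := by
  ring

theorem damping_le {σ₁ α β α' β' : ℝ} (hα : 0 ≤ α) (hβ : 0 ≤ β)
    (hsig : α ^ 2 + β ^ 2 ≤ σ₁ / 2) (hξ : α' ^ 2 + β' ^ 2 ≤ σ₁ / 6) :
    (β ^ 2 + β' ^ 2) * α + (α ^ 2 + α' ^ 2) * β ≤ 2 * σ₁ / 3 * (α + β) := by
  have hβ_mass : β ^ 2 + β' ^ 2 ≤ 2 * σ₁ / 3 := by nlinarith [sq_nonneg α, sq_nonneg α']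
  have hα_mass : α ^ 2 + α' ^ 2 ≤ 2 * σ₁ / 3 := by nlinarith [sq_nonneg β, sq_nonneg β']
  linear_combination mul_le_mul_of_nonneg_right hβ_mass hα + mul_le_mul_of_nonneg_right hα_mass hβ

end Rank1Factorization

open Rank1Factorization in
theorem rank1_stage1_growth_general (σ₁ η α β α' β' : ℝ)
    (hη0 : 0 < η)
    (hα : 0 < α) (hβ : 0 < β)
    (hsig : α ^ 2 + β ^ 2 ≤ σ₁ / 2)
    (hξ : α' ^ 2 + β' ^ 2 ≤ σ₁ / 6)
    (αp βp : ℝ)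
    (hαp : αp = (1 - η * (β ^ 2 + β' ^ 2)) * α + η * σ₁ * β)
    (hβp : βp = (1 - η * (α ^ 2 + α' ^ 2)) * β + η * σ₁ * α) :
    (1 + η * σ₁ / 3) * (α + β) ≤ αp + βp ∧ αp + βp ≤ (1 + η * σ₁) * (α + β) := by
  subst hαp hβp
  rw [step_sum_eq]
  have hdamp_le := mul_le_mul_of_nonneg_left (damping_le hα.le hβ.le hsig hξ) hη0.le
  have hdamp_nonneg : 0 ≤ η * ((β ^ 2 + β' ^ 2) * α + (α ^ 2 + α' ^ 2) * β) := by positivity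
  constructor
  · linear_combination hdamp_le
  · linarith

/-- Exponential growth of the signal strength during the saddle-escaping stage of
gradient descent for rank-1 matrix factorization. -/
theorem rank1_stage1_growth (σ₁ η α β α' β' : ℝ)
    (hσ : 0 < σ₁) (hη0 : 0 < η) (hη : η ≤ 1 / σ₁)
    (hα : 0 < α) (hβ : 0 < β)
    (hsig : α ^ 2 + β ^ 2 ≤ σ₁ / 2)
    (hξ : α' ^ 2 + β' ^ 2 ≤ σ₁ / 6)
    (αp βp : ℝ)
    (hαp : αp = (1 - η * (β ^ 2 + β' ^ 2)) * α + η * σ₁ * β)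
    (hβp : βp = (1 - η * (α ^ 2 + α' ^ 2)) * β + η * σ₁ * α) :
    (1 + η * σ₁ / 3) * (α + β) ≤ αp + βp ∧ αp + βp ≤ (1 + η * σ₁) * (α + β) :=
  rank1_stage1_growth_general σ₁ η α β α' β' hη0 hα hβ hsig hξ αp βp hαp hβp
end

section
/- Let σ₁ > 0, 0 < η ≤ 1/σ₁, and let α, β, α_⊥, β_⊥ be reals with α > 0, β > 0, α² + β² ≤ σ₁/2, ξ := α_⊥² + β_⊥² ≤ σ₁/6, and |α − β| ≤ (99/101)·(α + β). Define α₊ = (1 − η(β² + β_⊥²))α + ησ₁β and β₊ = (1 − η(α² + α_⊥²))β + ησ₁α. Then |α₊ − β₊| ≤ (99/101)·(α₊ + β₊). (This shows gradient descent keeps the signal strengths of the two layers within a constant factor of each other during the saddle-escaping stage.) -/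
/-!
Write `d = α - β`, `s = α + β`, and `E = β'² α + α'² β` for the drift caused by the complement
spaces. One step of gradient descent acts on `d` and `s` as
`d₊ = (1 - ησ₁ + ηαβ) d + η (α'² β - β'² α)` and `s₊ = (1 + ησ₁ - ηαβ) s - η E`.
Since `ησ₁ ≤ 1` the first coefficient is nonnegative, so `|d₊| ≤ c (1 - ησ₁ + ηαβ) s + η E`, while
`c s₊` exceeds this by `η (2c s (σ₁ - αβ) - (1 + c) E)`. Thus the ratio bound `|d| ≤ c s` survives
as long as the complement drift is small against the signal: `(1 + c) E ≤ 2c s (σ₁ - αβ)`.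
For `c = 99/101` this follows from `E ≤ ξ s ≤ σ₁ s / 6` and `αβ ≤ (α² + β²)/2 ≤ σ₁/4`.
-/

namespace RankOneGD

variable (σ₁ η α β α' β' : ℝ)

lemma step_sub_eq :
    ((1 - η * (β ^ 2 + β' ^ 2)) * α + η * σ₁ * β) - ((1 - η * (α ^ 2 + α' ^ 2)) * β + η * σ₁ * α)
      = (1 - η * σ₁ + η * (α * β)) * (α - β) + η * (α' ^ 2 * β - β' ^ 2 * α) := by
  ring

lemma step_add_eq :
    ((1 - η * (β ^ 2 + β' ^ 2)) * α + η * σ₁ * β) + ((1 - η * (α ^ 2 + α' ^ 2)) * β + η * σ₁ * α)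
      = (1 + η * σ₁ - η * (α * β)) * (α + β) - η * (β' ^ 2 * α + α' ^ 2 * β) := by
  ring

variable {σ₁ η α β α' β'}

lemma abs_cross_drift_le (hα : 0 ≤ α) (hβ : 0 ≤ β) :
    |α' ^ 2 * β - β' ^ 2 * α| ≤ β' ^ 2 * α + α' ^ 2 * β := by
  have hαβ' : 0 ≤ α' ^ 2 * β := by positivity
  have hβα' : 0 ≤ β' ^ 2 * α := by positivity
  rw [abs_le]
  constructor <;> linarith

lemma abs_step_sub_le_mul_step_add {c : ℝ} (hη : 0 ≤ η) (hησ : η * σ₁ ≤ 1)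
    (hα : 0 ≤ α) (hβ : 0 ≤ β) (hratio : |α - β| ≤ c * (α + β))
    (hdrift : (1 + c) * (β' ^ 2 * α + α' ^ 2 * β) ≤ 2 * c * (α + β) * (σ₁ - α * β)) :
    |((1 - η * (β ^ 2 + β' ^ 2)) * α + η * σ₁ * β) - ((1 - η * (α ^ 2 + α' ^ 2)) * β + η * σ₁ * α)|
      ≤ c * (((1 - η * (β ^ 2 + β' ^ 2)) * α + η * σ₁ * β)
        + ((1 - η * (α ^ 2 + α' ^ 2)) * β + η * σ₁ * α)) := by
  rw [step_sub_eq, step_add_eq]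
  have ht : 0 ≤ 1 - η * σ₁ + η * (α * β) := by
    have : 0 ≤ η * (α * β) := by positivity
    linarith
  calc |(1 - η * σ₁ + η * (α * β)) * (α - β) + η * (α' ^ 2 * β - β' ^ 2 * α)|
      ≤ (1 - η * σ₁ + η * (α * β)) * |α - β| + η * |α' ^ 2 * β - β' ^ 2 * α| := by
        refine (abs_add_le _ _).trans_eq ?_
        rw [abs_mul, abs_mul, abs_of_nonneg ht, abs_of_nonneg hη]
    _ ≤ (1 - η * σ₁ + η * (α * β)) * (c * (α + β)) + η * (β' ^ 2 * α + α' ^ 2 * β) := by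
        gcongr
        exact abs_cross_drift_le hα hβ
    _ ≤ c * ((1 + η * σ₁ - η * (α * β)) * (α + β) - η * (β' ^ 2 * α + α' ^ 2 * β)) := by
        nlinarith [mul_le_mul_of_nonneg_left hdrift hη]

lemma complement_drift_le (hα : 0 ≤ α) (hβ : 0 ≤ β) (hsig : α ^ 2 + β ^ 2 ≤ σ₁ / 2)
    (hξ : α' ^ 2 + β' ^ 2 ≤ σ₁ / 6) :
    100 * (β' ^ 2 * α + α' ^ 2 * β) ≤ 99 * ((α + β) * (σ₁ - α * β)) := by
  have hE : β' ^ 2 * α + α' ^ 2 * β ≤ (α + β) * (σ₁ / 6) :=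
    calc β' ^ 2 * α + α' ^ 2 * β ≤ (α + β) * (α' ^ 2 + β' ^ 2) := by
          nlinarith [mul_nonneg (sq_nonneg α') hα, mul_nonneg (sq_nonneg β') hβ]
      _ ≤ (α + β) * (σ₁ / 6) := by gcongr
  have hαβ : 3 * σ₁ / 4 ≤ σ₁ - α * β := by nlinarith [sq_nonneg (α - β)]
  have hs : 0 ≤ α + β := by positivity
  nlinarith [mul_le_mul_of_nonneg_left hαβ hs]

end RankOneGD

open RankOneGD in
/-- Gradient descent keeps the signal strengths of the two layers within a constant
factor of each other during the saddle-escaping stage (rank-1 matrix factorization). -/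
theorem rank1_stage1_ratio (σ₁ η α β α' β' : ℝ)
    (hσ : 0 < σ₁) (hη0 : 0 < η) (hη : η ≤ 1 / σ₁)
    (hα : 0 < α) (hβ : 0 < β)
    (hsig : α ^ 2 + β ^ 2 ≤ σ₁ / 2)
    (hξ : α' ^ 2 + β' ^ 2 ≤ σ₁ / 6)
    (hratio : |α - β| ≤ (99 / 101) * (α + β))
    (αp βp : ℝ)
    (hαp : αp = (1 - η * (β ^ 2 + β' ^ 2)) * α + η * σ₁ * β)
    (hβp : βp = (1 - η * (α ^ 2 + α' ^ 2)) * β + η * σ₁ * α) :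
    |αp - βp| ≤ (99 / 101) * (αp + βp) := by
  have hησ : η * σ₁ ≤ 1 := (le_div_iff₀ hσ).mp hη
  have hdrift := complement_drift_le hα.le hβ.le hsig hξ
  subst hαp hβp
  exact abs_step_sub_le_mul_step_add hη0.le hησ hα.le hβ.le hratio (by linarith)
end

section
/- Let σ₁ > 0, c₁ > 0, η > 0, and let α, β, α_⊥, β_⊥ be reals with α² ≥ c₁σ₁, β² ≥ c₁σ₁, η(α² + α_⊥²) ≤ 1, η(β² + β_⊥²) ≤ 1, and ηc₁σ₁ ≤ 1. Define ξ = α_⊥² + β_⊥² and ξ₊ = (1 − η(β² + β_⊥²))²·α_⊥² + (1 − η(α² + α_⊥²))²·β_⊥². Then ξ₊ ≤ (1 − ηc₁σ₁)·ξ. (This is the linear shrinkage of the complement-space magnitude during the local convergence stage of gradient descent for rank-1 matrix factorization.) -/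
/-!
Each complement coordinate is multiplied by a damping factor `1 - η s` with
`c₁ σ₁ ≤ s` and `η s ≤ 1`; squaring a number in `[0, 1]` can only decrease it, so the
squared factor is at most `1 - η s ≤ 1 - η c₁ σ₁`.
-/

section

variable {R : Type*} [Ring R] [LinearOrder R] [IsStrictOrderedRing R]

theorem sq_one_sub_le_one_sub {x y : R} (hx₀ : 0 ≤ x) (hx₁ : x ≤ 1) (hyx : y ≤ x) :
    (1 - x) ^ 2 ≤ 1 - y :=
  calc (1 - x) ^ 2 ≤ 1 - x :=
        pow_le_of_le_one (sub_nonneg.2 hx₁) (sub_le_self _ hx₀) two_ne_zero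
    _ ≤ 1 - y := sub_le_sub_left hyx 1

theorem sq_one_sub_mul_sq_add_sq_le {η m a b : R} (hη : 0 ≤ η) (hm : m ≤ a ^ 2)
    (hstep : η * (a ^ 2 + b ^ 2) ≤ 1) : (1 - η * (a ^ 2 + b ^ 2)) ^ 2 ≤ 1 - η * m :=
  sq_one_sub_le_one_sub (mul_nonneg hη (add_nonneg (sq_nonneg a) (sq_nonneg b))) hstep
    (mul_le_mul_of_nonneg_left (hm.trans (le_add_of_nonneg_right (sq_nonneg b))) hη)

end

theorem rank1_stage2_xi_shrink_general (σ₁ c₁ η α β α' β' : ℝ)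
    (hη : 0 < η)
    (hα : c₁ * σ₁ ≤ α ^ 2) (hβ : c₁ * σ₁ ≤ β ^ 2)
    (hηα : η * (α ^ 2 + α' ^ 2) ≤ 1) (hηβ : η * (β ^ 2 + β' ^ 2) ≤ 1)
    (ξ ξp : ℝ)
    (hξ : ξ = α' ^ 2 + β' ^ 2)
    (hξp : ξp = (1 - η * (β ^ 2 + β' ^ 2)) ^ 2 * α' ^ 2
              + (1 - η * (α ^ 2 + α' ^ 2)) ^ 2 * β' ^ 2) :
    ξp ≤ (1 - η * (c₁ * σ₁)) * ξ := by
  have hβfactor := sq_one_sub_mul_sq_add_sq_le hη.le hβ hηβ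
  have hαfactor := sq_one_sub_mul_sq_add_sq_le hη.le hα hηα
  calc ξp ≤ (1 - η * (c₁ * σ₁)) * α' ^ 2 + (1 - η * (c₁ * σ₁)) * β' ^ 2 := by
        rw [hξp]
        gcongr
    _ = (1 - η * (c₁ * σ₁)) * ξ := by rw [hξ, mul_add]

/-- Linear shrinkage of the complement-space magnitude during the local convergence
stage of gradient descent for rank-1 matrix factorization. -/
theorem rank1_stage2_xi_shrink (σ₁ c₁ η α β α' β' : ℝ)
    (hσ : 0 < σ₁) (hc₁ : 0 < c₁) (hη : 0 < η)
    (hα : c₁ * σ₁ ≤ α ^ 2) (hβ : c₁ * σ₁ ≤ β ^ 2)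
    (hηα : η * (α ^ 2 + α' ^ 2) ≤ 1) (hηβ : η * (β ^ 2 + β' ^ 2) ≤ 1)
    (hηc : η * (c₁ * σ₁) ≤ 1)
    (ξ ξp : ℝ)
    (hξ : ξ = α' ^ 2 + β' ^ 2)
    (hξp : ξp = (1 - η * (β ^ 2 + β' ^ 2)) ^ 2 * α' ^ 2
              + (1 - η * (α ^ 2 + α' ^ 2)) ^ 2 * β' ^ 2) :
    ξp ≤ (1 - η * (c₁ * σ₁)) * ξ :=
  rank1_stage2_xi_shrink_general σ₁ c₁ η α β α' β' hη hα hβ hηα hηβ ξ ξp hξ hξp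
end

section
/- Let σ₁ > 0, c₁ > 0, η > 0, and let α, β, α_⊥, β_⊥ be reals with α² ≥ c₁σ₁, β² ≥ c₁σ₁, 0 < αβ ≤ σ₁, η(α² + β²) ≤ 1, and η·|αβ·h + α²β_⊥² + β²α_⊥² + α_⊥²β_⊥²| ≤ (α² + β²)/2, where h = αβ − σ₁ and ξ = α_⊥² + β_⊥². Define h₊ = (1 − η(α² + β²) + η²(αβ·h + α²β_⊥² + β²α_⊥² + α_⊥²β_⊥²))·h − η·αβ·ξ + η²σ₁·α_⊥²β_⊥². Then, assuming h ≤ 0 and η²σ₁α_⊥²β_⊥² ≤ η·αβ·ξ, we have |h₊| ≤ (1 − ηc₁σ₁)·|h| + ησ₁·ξ. (This is the linear convergence of the signal error during the local convergence stage of gradient descent for rank-1 matrix factorization.) -/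
/-! Writing `h₊ = A h - N` with `A = 1 - η(α² + β²) + η² X` and
`N = η αβ ξ - η² σ₁ α_⊥² β_⊥²`, the step-size conditions keep the contraction factor `A` in
`[-(1 - η c₁ σ₁), 1 - η c₁ σ₁]`, while `αβ ≤ σ₁` and the noise hypothesis give `0 ≤ N ≤ η σ₁ ξ`. -/

lemma abs_one_sub_add_le {s t c : ℝ} (hs : s ≤ 1) (ht : |t| ≤ s / 2) (hc : c ≤ s / 2) :
    |1 - s + t| ≤ 1 - c := by
  obtain ⟨ht₁, ht₂⟩ := abs_le.mp ht
  exact abs_le.mpr ⟨by linarith, by linarith⟩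

lemma abs_mul_sub_le_of_abs_le {A h N a b : ℝ} (hA : |A| ≤ a) (hN₀ : 0 ≤ N) (hN : N ≤ b) :
    |A * h - N| ≤ a * |h| + b :=
  calc |A * h - N| ≤ |A * h| + |N| := abs_sub _ _
    _ = |A| * |h| + N := by rw [abs_mul, abs_of_nonneg hN₀]
    _ ≤ a * |h| + b := by gcongr

theorem rank1_stage2_h_converge_general (σ₁ c₁ η α β α' β' : ℝ)
    (hσ : 0 < σ₁) (hη : 0 < η)
    (hα : c₁ * σ₁ ≤ α ^ 2) (hβ : c₁ * σ₁ ≤ β ^ 2)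
    (hαβσ : α * β ≤ σ₁)
    (hηab : η * (α ^ 2 + β ^ 2) ≤ 1)
    (h ξ : ℝ)
    (hξ : ξ = α' ^ 2 + β' ^ 2)
    (hηX : η * |α * β * h + α ^ 2 * β' ^ 2 + β ^ 2 * α' ^ 2 + α' ^ 2 * β' ^ 2|
            ≤ (α ^ 2 + β ^ 2) / 2)
    (hp : ℝ)
    (hhp : hp = (1 - η * (α ^ 2 + β ^ 2)
            + η ^ 2 * (α * β * h + α ^ 2 * β' ^ 2 + β ^ 2 * α' ^ 2 + α' ^ 2 * β' ^ 2)) * h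
          - η * (α * β) * ξ + η ^ 2 * σ₁ * (α' ^ 2 * β' ^ 2))
    (hnoise : η ^ 2 * σ₁ * (α' ^ 2 * β' ^ 2) ≤ η * (α * β) * ξ) :
    |hp| ≤ (1 - η * (c₁ * σ₁)) * |h| + η * σ₁ * ξ := by
  set X := α * β * h + α ^ 2 * β' ^ 2 + β ^ 2 * α' ^ 2 + α' ^ 2 * β' ^ 2
  have hfactor : |1 - η * (α ^ 2 + β ^ 2) + η ^ 2 * X| ≤ 1 - η * (c₁ * σ₁) := by
    refine abs_one_sub_add_le hηab ?_ (by nlinarith)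
    calc |η ^ 2 * X| = η * (η * |X|) := by rw [abs_mul, abs_of_nonneg (by positivity)]; ring
      _ ≤ η * ((α ^ 2 + β ^ 2) / 2) := by gcongr
      _ = η * (α ^ 2 + β ^ 2) / 2 := by ring
  have hξ₀ : 0 ≤ ξ := hξ ▸ by positivity
  have hnoise_le : η * (α * β) * ξ - η ^ 2 * σ₁ * (α' ^ 2 * β' ^ 2) ≤ η * σ₁ * ξ := by
    have : η * (α * β) * ξ ≤ η * σ₁ * ξ := by gcongr
    linarith [show 0 ≤ η ^ 2 * σ₁ * (α' ^ 2 * β' ^ 2) by positivity]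
  rw [hhp, sub_add]
  exact abs_mul_sub_le_of_abs_le hfactor (by linarith) (by linarith)

/-- Linear convergence of the signal error during the local convergence stage of
gradient descent for rank-1 matrix factorization. -/
theorem rank1_stage2_h_converge (σ₁ c₁ η α β α' β' : ℝ)
    (hσ : 0 < σ₁) (hc₁ : 0 < c₁) (hη : 0 < η)
    (hα : c₁ * σ₁ ≤ α ^ 2) (hβ : c₁ * σ₁ ≤ β ^ 2)
    (hαβ0 : 0 < α * β) (hαβσ : α * β ≤ σ₁)
    (hηab : η * (α ^ 2 + β ^ 2) ≤ 1)
    (h ξ : ℝ)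
    (hh : h = α * β - σ₁) (hξ : ξ = α' ^ 2 + β' ^ 2)
    (hηX : η * |α * β * h + α ^ 2 * β' ^ 2 + β ^ 2 * α' ^ 2 + α' ^ 2 * β' ^ 2|
            ≤ (α ^ 2 + β ^ 2) / 2)
    (hp : ℝ)
    (hhp : hp = (1 - η * (α ^ 2 + β ^ 2)
            + η ^ 2 * (α * β * h + α ^ 2 * β' ^ 2 + β ^ 2 * α' ^ 2 + α' ^ 2 * β' ^ 2)) * h
          - η * (α * β) * ξ + η ^ 2 * σ₁ * (α' ^ 2 * β' ^ 2))
    (hneg : h ≤ 0)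
    (hnoise : η ^ 2 * σ₁ * (α' ^ 2 * β' ^ 2) ≤ η * (α * β) * ξ) :
    |hp| ≤ (1 - η * (c₁ * σ₁)) * |h| + η * σ₁ * ξ :=
  rank1_stage2_h_converge_general σ₁ c₁ η α β α' β' hσ hη hα hβ hαβσ hηab h ξ hξ hηX hp hhp hnoise
end
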